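/- arXiv:1701.02764 — 8 statements merged into one kernel-verified Lean document; each statement's English description precedes it below -/
import Mathlib

section
/- A finite simple graph G with n ≥ 1 vertices and m ≥ 1 edges admits a three-coloring if and only if δ_n(M(G)) ≤ √(m t² + 4 n t⁶ + m t¹⁰), where t = 1/(4(m+n)³). -/
open Matrix

/-- The Frobenius norm of a real matrix: the square root of the sum of squares of entries. -/
noncomputable def frob {α β : Type*} [Fintype α] [Fintype β] (X : Matrix α β ℝ) : ℝ :=
  Real.sqrt (∑ i, ∑ j, X i j ^ 2)

/-- `delta M k` is the minimum, over all choices of a `k`-element set `𝒱` of column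
indices of `M` (with `S` the corresponding column submatrix) and all matrices `A`,
of the Frobenius norm `‖M - S * A‖`. -/
noncomputable def delta {α β : Type*} [Fintype α] [Fintype β]
    (M : Matrix α β ℝ) (k : ℕ) : ℝ :=
  sInf { x : ℝ | ∃ 𝒱 : Finset β, 𝒱.card = k ∧ ∃ A : Matrix 𝒱 β ℝ,
    x = frob (M - Matrix.of (fun r (c : 𝒱) => M r c.val) * A) }

/-- The matrix `M(G)` of the reduction: rows indexed by `V ⊕ {1,2,3} ⊕ {ε}`,
columns indexed by `(V × {1,2,3}) ⊕ E`. -/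
def MG {V : Type*} [Fintype V] [DecidableEq V] (G : SimpleGraph V) [DecidableRel G.Adj]
    (t : ℝ) : Matrix (V ⊕ Fin 3 ⊕ Unit) ((V × Fin 3) ⊕ G.edgeSet) ℝ :=
  fun r c =>
    match r, c with
    | Sum.inl u, Sum.inl (v, _) => if u = v then (1 : ℝ) else 0
    | Sum.inl u, Sum.inr e => if u ∈ (e : Sym2 V) then t ^ 2 else 0
    | Sum.inr (Sum.inl i), Sum.inl (_, j) => if i = j then t ^ 3 else 0
    | Sum.inr (Sum.inl _), Sum.inr _ => t ^ 5
    | Sum.inr (Sum.inr _), Sum.inl _ => 0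
    | Sum.inr (Sum.inr _), Sum.inr _ => t

/-!
If `φ` is a proper coloring, select the columns `(v, φ v)` and express every column `c` through
them with coefficients `M(v, c)`. This clears the vertex rows; what is left is `t` on the edge
columns in row `ε` and, in the colour rows, `t³ (δ_{ij} - δ_{i, φ w})` on column `(w, j)` and
`t⁵ (1 - δ_{i, φ a} - δ_{i, φ b})` on the edge `ab`, of total squared norm `m t² + 4 n t⁶ + m t¹⁰`.

For the converse, any vector orthogonal to the selected columns is orthogonal to every column
of `S A`, so Bessel's inequality bounds `‖M - S A‖²` below by the projections of the columns of
`M` on a family of such orthogonal vectors. If the selection is `{(v, φ v)}`, the colour-class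
vectors `e_i - t³ ∑_{φ v = i} e_v` and `e_ε` form such a family and recover the value above up to
a factor `1 + n t⁶` on the colour part, while a monochromatic edge contributes `3 t¹⁰` instead of
`t¹⁰`. Otherwise some vertex has no selected column; a nonzero vector supported on the vertex
rows and `ε` and orthogonal to all `n` selected columns exists by counting dimensions, and it
forces `‖M - S A‖² ≥ 1 - 2 t²`. For `t = 1/(4(m+n)³)` both bounds exceed the threshold by `t¹⁰`.
-/

open Finset

section ColumnSelection

variable {ι ρ κ : Type*} [Fintype ρ]

def columnSubmatrix {R : Type*} (M : Matrix ρ κ R) (𝒱 : Finset κ) : Matrix ρ 𝒱 R :=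
  M.submatrix id (↑)

theorem delta_le_frob [Fintype κ] (M : Matrix ρ κ ℝ) (𝒱 : Finset κ) (A : Matrix 𝒱 κ ℝ) :
    delta M 𝒱.card ≤ frob (M - columnSubmatrix M 𝒱 * A) :=
  csInf_le ⟨0, by rintro _ ⟨_, _, _, rfl⟩; exact Real.sqrt_nonneg _⟩ ⟨𝒱, rfl, A, rfl⟩

theorem le_delta [Fintype κ] (M : Matrix ρ κ ℝ) {k : ℕ} (hk : k ≤ Fintype.card κ) {b : ℝ}
    (h : ∀ 𝒱 : Finset κ, 𝒱.card = k → ∀ A : Matrix 𝒱 κ ℝ,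
      b ≤ frob (M - columnSubmatrix M 𝒱 * A)) :
    b ≤ delta M k := by
  obtain ⟨𝒱, -, h𝒱⟩ := Finset.exists_subset_card_eq (s := (univ : Finset κ)) hk
  exact le_csInf ⟨_, 𝒱, h𝒱, 0, rfl⟩ fun _ ⟨𝒱, h𝒱, A, hx⟩ => hx ▸ h 𝒱 h𝒱 A

/-- Bessel's inequality for the orthogonal, not necessarily normalised, rows of `P`; a zero row
contributes `0 / 0 = 0`. -/
theorem sum_sq_mulVec_div_le_dotProduct_self [Fintype ι] (P : Matrix ι ρ ℝ)
    (hP : (P * Pᵀ).IsDiag) (x : ρ → ℝ) :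
    ∑ i, (P *ᵥ x) i ^ 2 / (P * Pᵀ) i i ≤ x ⬝ᵥ x := by
  classical
  set d : ι → ℝ := fun i => (P * Pᵀ) i i
  set c : ι → ℝ := fun i => (P *ᵥ x) i / d i
  have hPP : P * Pᵀ = diagonal d := hP.diagonal_diag.symm
  have hc : ∀ i, (P *ᵥ x) i * c i = (P *ᵥ x) i ^ 2 / d i := fun i => by ring
  have hdc : ∀ i, d i * c i * c i = (P *ᵥ x) i ^ 2 / d i := fun i => by
    rcases eq_or_ne (d i) 0 with h | h
    · simp [c, h]
    · simp only [c]
      field_simp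
  have hx : x ⬝ᵥ (Pᵀ *ᵥ c) = ∑ i, (P *ᵥ x) i ^ 2 / d i := by
    rw [dotProduct_mulVec, vecMul_transpose]
    exact Finset.sum_congr rfl fun i _ => hc i
  have hcc : (Pᵀ *ᵥ c) ⬝ᵥ (Pᵀ *ᵥ c) = ∑ i, (P *ᵥ x) i ^ 2 / d i := by
    rw [dotProduct_mulVec, vecMul_transpose, mulVec_mulVec, hPP]
    exact Finset.sum_congr rfl fun i _ => by rw [mulVec_diagonal, hdc]
  -- expand `0 ≤ ‖x - Pᵀ c‖²`, where `c i = (P x)ᵢ / ‖Pᵢ‖²` are the Fourier coefficients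
  have h0 : 0 ≤ (x - Pᵀ *ᵥ c) ⬝ᵥ (x - Pᵀ *ᵥ c) :=
    Finset.sum_nonneg fun r _ => mul_self_nonneg _
  rw [sub_dotProduct, dotProduct_sub, dotProduct_sub, dotProduct_comm (Pᵀ *ᵥ c) x, hx, hcc]
    at h0
  linarith

theorem mul_sub_columnSubmatrix_mul (M : Matrix ρ κ ℝ) (𝒱 : Finset κ) (A : Matrix 𝒱 κ ℝ)
    (P : Matrix ι ρ ℝ) (hP : ∀ i, ∀ p ∈ 𝒱, (P * M) i p = 0) :
    P * (M - columnSubmatrix M 𝒱 * A) = P * M := by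
  have : P * columnSubmatrix M 𝒱 = 0 := by
    ext i p
    exact hP i p p.2
  rw [Matrix.mul_sub, ← Matrix.mul_assoc, this, Matrix.zero_mul, sub_zero]

theorem sum_sq_mul_div_le_sum_sq_sub_columnSubmatrix_mul [Fintype ι] [Fintype κ]
    (M : Matrix ρ κ ℝ) (𝒱 : Finset κ) (A : Matrix 𝒱 κ ℝ) (P : Matrix ι ρ ℝ) (hP : (P * Pᵀ).IsDiag)
    (h𝒱 : ∀ i, ∀ p ∈ 𝒱, (P * M) i p = 0) :
    ∑ i, ∑ c, (P * M) i c ^ 2 / (P * Pᵀ) i i ≤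
      ∑ r, ∑ c, (M - columnSubmatrix M 𝒱 * A) r c ^ 2 := by
  rw [← mul_sub_columnSubmatrix_mul M 𝒱 A P h𝒱, Finset.sum_comm,
    Finset.sum_comm (s := (univ : Finset ρ))]
  refine Finset.sum_le_sum fun c _ => ?_
  have := sum_sq_mulVec_div_le_dotProduct_self P hP fun r => (M - columnSubmatrix M 𝒱 * A) r c
  simp only [sq] at this ⊢
  exact this

theorem sum_sq_vecMul_div_le_sum_sq_sub_columnSubmatrix_mul [Fintype κ] (M : Matrix ρ κ ℝ)
    (𝒱 : Finset κ) (A : Matrix 𝒱 κ ℝ) (y : ρ → ℝ) (hy : ∀ p ∈ 𝒱, (y ᵥ* M) p = 0) :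
    (∑ c, (y ᵥ* M) c ^ 2) / (y ⬝ᵥ y) ≤ ∑ r, ∑ c, (M - columnSubmatrix M 𝒱 * A) r c ^ 2 := by
  have := sum_sq_mul_div_le_sum_sq_sub_columnSubmatrix_mul M 𝒱 A (of fun (_ : Unit) => y)
    Subsingleton.pairwise fun _ => hy
  rw [Fintype.sum_unique] at this
  exact (le_of_eq (by rw [Finset.sum_div]; rfl)).trans this

theorem exists_ne_zero_vecMul_eq_zero (M : Matrix ρ κ ℝ) (T : Finset ρ) (Q : Finset κ)
    (h : Q.card < T.card) :
    ∃ y : ρ → ℝ, y ≠ 0 ∧ (∀ r ∉ T, y r = 0) ∧ ∀ q ∈ Q, (y ᵥ* M) q = 0 := by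
  classical
  have hdep : ¬ LinearIndependent ℝ fun (r : T) (q : Q) => M r q := fun hli => by
    have := hli.fintype_card_le_finrank
    simp only [Module.finrank_fintype_fun_eq_card, Fintype.card_coe] at this
    omega
  obtain ⟨g, hg, r₀, hr₀⟩ := Fintype.not_linearIndependent_iff.mp hdep
  refine ⟨fun r => if hr : r ∈ T then g ⟨r, hr⟩ else 0, fun hy => hr₀ ?_,
    fun r hr => dif_neg hr, fun q hq => ?_⟩
  · simpa [r₀.2] using congrFun hy r₀
  · have hq := congrFun hg ⟨q, hq⟩
    simp only [Finset.sum_apply, Pi.smul_apply, smul_eq_mul, Pi.zero_apply] at hq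
    rw [vecMul, dotProduct, ← Finset.sum_subset (Finset.subset_univ T)
      (fun r _ hr => by rw [dif_neg hr, zero_mul]), ← Finset.sum_coe_sort T, ← hq]
    exact Finset.sum_congr rfl fun r _ => by rw [dif_pos r.2]

end ColumnSelection

section ColorColumns

variable {V C β : Type*} [Fintype V]

def colorColumns (φ : V → C) : Finset ((V × C) ⊕ β) :=
  univ.map ⟨fun v => .inl (v, φ v), fun _ _ h => congrArg Prod.fst (Sum.inl_injective h)⟩

lemma card_colorColumns (φ : V → C) : (colorColumns (β := β) φ).card = Fintype.card V := by
  simp [colorColumns]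

lemma sum_colorColumns (φ : V → C) (f : (V × C) ⊕ β → ℝ) :
    ∑ p ∈ colorColumns φ, f p = ∑ v, f (.inl (v, φ v)) :=
  Finset.sum_map _ _ _

lemma eq_colorColumns_or_exists_forall_inl_notMem (𝒱 : Finset ((V × C) ⊕ β))
    (h𝒱 : 𝒱.card = Fintype.card V) :
    (∃ φ : V → C, 𝒱 = colorColumns φ) ∨ ∃ v, ∀ i, .inl (v, i) ∉ 𝒱 := by
  by_cases h : ∀ v, ∃ i, .inl (v, i) ∈ 𝒱
  · choose φ hφ using h
    refine .inl ⟨φ, (Finset.eq_of_subset_of_card_le (fun p hp => ?_) ?_).symm⟩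
    · obtain ⟨v, -, rfl⟩ := Finset.mem_map.mp hp
      exact hφ v
    · rw [h𝒱, card_colorColumns]
  · simp only [not_forall, not_exists] at h
    exact .inr h

end ColorColumns

section Annihilator

variable {V C : Type*} [Fintype V] [Fintype C] [DecidableEq C] (t : ℝ)

def colorIndicator (φ : V → C) : Matrix (C ⊕ Unit) V ℝ :=
  fun k v => if k = .inl (φ v) then 1 else 0

/-- Row `i : C` is `e_i - t³ ∑_{φ v = i} e_v`, row `ε` is `e_ε`. -/
def annihilator (φ : V → C) : Matrix (C ⊕ Unit) (V ⊕ C ⊕ Unit) ℝ :=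
  fromCols (-t ^ 3 • colorIndicator φ) 1

variable {t}

lemma annihilator_mul_transpose (φ : V → C) :
    annihilator t φ * (annihilator t φ)ᵀ =
      t ^ 6 • (colorIndicator φ * (colorIndicator φ)ᵀ) + 1 := by
  rw [annihilator, transpose_fromCols, fromCols_mul_fromRows, transpose_smul, Matrix.smul_mul,
    Matrix.mul_smul, smul_smul, transpose_one, Matrix.one_mul]
  ring_nf

lemma isDiag_annihilator_mul_transpose (φ : V → C) :
    (annihilator t φ * (annihilator t φ)ᵀ).IsDiag := by
  rw [annihilator_mul_transpose]
  refine (IsDiag.smul _ fun k k' hkk' => Finset.sum_eq_zero fun v _ => ?_).add isDiag_one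
  simp only [colorIndicator, transpose_apply]
  split_ifs with h h' <;> simp_all

lemma annihilator_mul_transpose_apply_mem_Icc (φ : V → C) (k : C ⊕ Unit) :
    (annihilator t φ * (annihilator t φ)ᵀ) k k ∈ Set.Icc 1 (1 + Fintype.card V * t ^ 6) := by
  have hsq : ∀ v, colorIndicator φ k v * colorIndicator φ k v ∈ Set.Icc (0 : ℝ) 1 := fun v => by
    simp only [colorIndicator]
    split_ifs <;> norm_num
  have h0 : 0 ≤ ∑ v, colorIndicator φ k v * colorIndicator φ k v :=
    Finset.sum_nonneg fun v _ => (hsq v).1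
  have h1 : ∑ v, colorIndicator φ k v * colorIndicator φ k v ≤ Fintype.card V := by
    simpa using Finset.sum_le_sum fun v (_ : v ∈ univ) => (hsq v).2
  rw [annihilator_mul_transpose]
  simp only [Matrix.add_apply, Matrix.smul_apply, one_apply_eq, mul_apply, transpose_apply,
    smul_eq_mul]
  constructor <;> nlinarith [pow_two_nonneg (t ^ 3)]

lemma annihilator_mul_transpose_inr (φ : V → C) (u : Unit) :
    (annihilator t φ * (annihilator t φ)ᵀ) (.inr u) (.inr u) = 1 := by
  rw [annihilator_mul_transpose]
  simp [colorIndicator, mul_apply]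

lemma annihilator_mul_apply {κ : Type*} (φ : V → C) (M : Matrix (V ⊕ C ⊕ Unit) κ ℝ)
    (k : C ⊕ Unit) (c : κ) :
    (annihilator t φ * M) k c =
      M (.inr k) c - t ^ 3 * ∑ v, colorIndicator φ k v * M (.inl v) c := by
  conv_lhs => rw [annihilator, ← fromRows_toRows M, fromCols_mul_fromRows, Matrix.one_mul,
    Matrix.smul_mul]
  simp only [Matrix.add_apply, Matrix.smul_apply, mul_apply, smul_eq_mul, toRows₁, toRows₂,
    of_apply]
  ring

end Annihilator

lemma sum_sum_sq_ite_sub_ite (a : Fin 3) :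
    ∑ j : Fin 3, ∑ i : Fin 3, ((if i = j then 1 else 0) - if i = a then 1 else 0 : ℝ) ^ 2 = 4 := by
  fin_cases a <;> simp +decide [Fin.sum_univ_three] <;> norm_num

lemma sum_sq_one_sub_ite_sub_ite (a b : Fin 3) :
    ∑ i : Fin 3, (1 - (if i = a then 1 else 0) - if i = b then 1 else 0 : ℝ) ^ 2 =
      if a = b then 3 else 1 := by
  fin_cases a <;> fin_cases b <;> simp +decide [Fin.sum_univ_three] <;> norm_num

section Reduction

variable {V : Type*} [Fintype V] [DecidableEq V] (G : SimpleGraph V) [DecidableRel G.Adj]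
  {t : ℝ}

@[simp] lemma MG_inl_inl (u v : V) (i : Fin 3) :
    MG G t (.inl u) (.inl (v, i)) = if u = v then 1 else 0 := rfl
@[simp] lemma MG_inl_inr (u : V) (e : G.edgeSet) :
    MG G t (.inl u) (.inr e) = if u ∈ (e : Sym2 V) then t ^ 2 else 0 := rfl
@[simp] lemma MG_inr_inl_inl (i j : Fin 3) (v : V) :
    MG G t (.inr (.inl i)) (.inl (v, j)) = if i = j then t ^ 3 else 0 := rfl
@[simp] lemma MG_inr_inl_inr (i : Fin 3) (e : G.edgeSet) :
    MG G t (.inr (.inl i)) (.inr e) = t ^ 5 := rfl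
@[simp] lemma MG_inr_inr_inl (u : Unit) (p : V × Fin 3) :
    MG G t (.inr (.inr u)) (.inl p) = 0 := rfl
@[simp] lemma MG_inr_inr_inr (u : Unit) (e : G.edgeSet) :
    MG G t (.inr (.inr u)) (.inr e) = t := rfl

lemma sum_ite_mem_sym2 {a b : V} (hab : a ≠ b) (f : V → ℝ) :
    ∑ v, (if v ∈ s(a, b) then f v else 0) = f a + f b := by
  rw [← Finset.sum_filter, show univ.filter (· ∈ s(a, b)) = {a, b} by ext; simp,
    Finset.sum_pair hab]

variable (φ : V → Fin 3)

lemma MG_inr_inl_self (k : Fin 3 ⊕ Unit) (v : V) :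
    MG G t (.inr k) (.inl (v, φ v)) = t ^ 3 * colorIndicator φ k v := by
  rcases k with i | u <;> simp [colorIndicator]

lemma annihilator_mul_MG_inl_self (k : Fin 3 ⊕ Unit) (v : V) :
    (annihilator t φ * MG G t) k (.inl (v, φ v)) = 0 := by
  simp [annihilator_mul_apply, MG_inr_inl_self]

lemma annihilator_mul_MG_inl_inl (i j : Fin 3) (w : V) :
    (annihilator t φ * MG G t) (.inl i) (.inl (w, j)) =
      t ^ 3 * ((if i = j then 1 else 0) - if i = φ w then 1 else 0) := by
  simp only [annihilator_mul_apply, colorIndicator, MG_inr_inl_inl, MG_inl_inl, mul_ite, mul_one,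
    mul_zero, Finset.sum_ite_eq', Finset.mem_univ, if_true, Sum.inl.injEq]
  split_ifs <;> ring

lemma annihilator_mul_MG_inl_inr (i : Fin 3) {a b : V} (hab : G.Adj a b) :
    (annihilator t φ * MG G t) (.inl i) (.inr ⟨s(a, b), hab⟩) =
      t ^ 5 * (1 - (if i = φ a then 1 else 0) - if i = φ b then 1 else 0) := by
  rw [annihilator_mul_apply, MG_inr_inl_inr]
  simp only [MG_inl_inr, mul_ite, mul_zero]
  rw [sum_ite_mem_sym2 hab.ne]
  simp only [colorIndicator, Sum.inl.injEq]
  split_ifs <;> ring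

lemma annihilator_mul_MG_inr_inl (u : Unit) (p : V × Fin 3) :
    (annihilator t φ * MG G t) (.inr u) (.inl p) = 0 := by
  simp [annihilator_mul_apply, colorIndicator]

lemma annihilator_mul_MG_inr_inr (u : Unit) (e : G.edgeSet) :
    (annihilator t φ * MG G t) (.inr u) (.inr e) = t := by
  simp [annihilator_mul_apply, colorIndicator]

lemma sum_sq_annihilator_mul_MG_inr (u : Unit) :
    ∑ c, (annihilator t φ * MG G t) (.inr u) c ^ 2 = Fintype.card G.edgeSet * t ^ 2 := by
  simp [Fintype.sum_sum_type, annihilator_mul_MG_inr_inl, annihilator_mul_MG_inr_inr]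

lemma sum_sq_annihilator_mul_MG_inl_inr {a b : V} (hab : G.Adj a b) :
    ∑ i, (annihilator t φ * MG G t) (.inl i) (.inr ⟨s(a, b), hab⟩) ^ 2 =
      t ^ 10 * if φ a = φ b then 3 else 1 := by
  simp only [annihilator_mul_MG_inl_inr, mul_pow, ← Finset.mul_sum, sum_sq_one_sub_ite_sub_ite]
  ring

lemma sum_sum_sq_annihilator_mul_MG_inl :
    ∑ i, ∑ c, (annihilator t φ * MG G t) (.inl i) c ^ 2 =
      4 * Fintype.card V * t ^ 6 +
        ∑ e : G.edgeSet, ∑ i, (annihilator t φ * MG G t) (.inl i) (.inr e) ^ 2 := by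
  rw [Finset.sum_comm, Fintype.sum_sum_type, Fintype.sum_prod_type]
  congr 1
  simp only [annihilator_mul_MG_inl_inl, mul_pow, ← Finset.mul_sum, sum_sum_sq_ite_sub_ite,
    Finset.sum_const, Finset.card_univ, nsmul_eq_mul]
  ring

def coloringCoeffs (t : ℝ) :
    Matrix (colorColumns (β := G.edgeSet) φ) ((V × Fin 3) ⊕ G.edgeSet) ℝ :=
  fun p c => Sum.elim (fun q => MG G t (.inl q.1) c) 0 p.1

lemma columnSubmatrix_mul_coloringCoeffs_apply (r : V ⊕ Fin 3 ⊕ Unit)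
    (c : (V × Fin 3) ⊕ G.edgeSet) :
    (columnSubmatrix (MG G t) (colorColumns φ) * coloringCoeffs G φ t) r c =
      ∑ v, MG G t r (.inl (v, φ v)) * MG G t (.inl v) c :=
  (Finset.sum_coe_sort _ _).trans <|
    sum_colorColumns φ fun p => MG G t r p * Sum.elim (fun q => MG G t (.inl q.1) c) 0 p

lemma MG_sub_mul_coloringCoeffs_inl (u : V) (c : (V × Fin 3) ⊕ G.edgeSet) :
    (MG G t - columnSubmatrix (MG G t) (colorColumns φ) * coloringCoeffs G φ t) (.inl u) c =
      0 := by
  simp [columnSubmatrix_mul_coloringCoeffs_apply]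

lemma MG_sub_mul_coloringCoeffs_inr (k : Fin 3 ⊕ Unit) (c : (V × Fin 3) ⊕ G.edgeSet) :
    (MG G t - columnSubmatrix (MG G t) (colorColumns φ) * coloringCoeffs G φ t) (.inr k) c =
      (annihilator t φ * MG G t) k c := by
  simp [columnSubmatrix_mul_coloringCoeffs_apply, annihilator_mul_apply, MG_inr_inl_self,
    Finset.mul_sum, mul_assoc]

lemma sum_sq_MG_sub_mul_coloringCoeffs (hφ : ∀ u v, G.Adj u v → φ u ≠ φ v) :
    ∑ r, ∑ c,
        (MG G t - columnSubmatrix (MG G t) (colorColumns φ) * coloringCoeffs G φ t) r c ^ 2 =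
      Fintype.card G.edgeSet * t ^ 2 + 4 * Fintype.card V * t ^ 6 +
        Fintype.card G.edgeSet * t ^ 10 := by
  have hedge (e : G.edgeSet) :
      ∑ i, (annihilator t φ * MG G t) (.inl i) (.inr e) ^ 2 = t ^ 10 := by
    obtain ⟨e, he⟩ := e
    induction e using Sym2.ind with
    | _ a b =>
      rw [sum_sq_annihilator_mul_MG_inl_inr G φ (hab := he), if_neg (hφ a b he), mul_one]
  rw [Fintype.sum_sum_type]
  simp only [MG_sub_mul_coloringCoeffs_inl, MG_sub_mul_coloringCoeffs_inr, ne_eq,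
    OfNat.ofNat_ne_zero, not_false_eq_true, zero_pow, Finset.sum_const_zero, zero_add]
  rw [Fintype.sum_sum_type, sum_sum_sq_annihilator_mul_MG_inl, Fintype.sum_unique (ι := Unit),
    sum_sq_annihilator_mul_MG_inr]
  simp only [hedge, Finset.sum_const, Finset.card_univ, nsmul_eq_mul]
  ring

lemma le_sum_sq_MG_sub_colorColumns_mul (hφ : ∃ u v, G.Adj u v ∧ φ u = φ v)
    (A : Matrix (colorColumns (β := G.edgeSet) φ) ((V × Fin 3) ⊕ G.edgeSet) ℝ) :
    Fintype.card G.edgeSet * t ^ 2 +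
        (4 * Fintype.card V * t ^ 6 + (Fintype.card G.edgeSet + 2) * t ^ 10) /
          (1 + Fintype.card V * t ^ 6) ≤
      ∑ r, ∑ c, (MG G t - columnSubmatrix (MG G t) (colorColumns φ) * A) r c ^ 2 := by
  obtain ⟨u, v, huv, hmono⟩ := hφ
  set f : G.edgeSet → ℝ := fun e => ∑ i, (annihilator t φ * MG G t) (.inl i) (.inr e) ^ 2
  have hf : ∀ e, t ^ 10 ≤ f e := by
    rintro ⟨e, he⟩
    induction e using Sym2.ind with
    | _ a b =>
      simp only [f]
      rw [sum_sq_annihilator_mul_MG_inl_inr G φ (hab := he)]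
      have : 0 ≤ t ^ 10 := by positivity
      split_ifs <;> linarith
  have hf₀ : f ⟨s(u, v), huv⟩ = 3 * t ^ 10 := by
    simp only [f]
    rw [sum_sq_annihilator_mul_MG_inl_inr G φ huv, if_pos hmono, mul_comm]
  have hcolor : 4 * Fintype.card V * t ^ 6 + (Fintype.card G.edgeSet + 2) * t ^ 10 ≤
      ∑ i, ∑ c, (annihilator t φ * MG G t) (.inl i) c ^ 2 := by
    have := Finset.single_le_sum (fun e _ => sub_nonneg.mpr (hf e)) (mem_univ ⟨s(u, v), huv⟩)
    rw [Finset.sum_sub_distrib, Finset.sum_const, Finset.card_univ, nsmul_eq_mul, hf₀] at this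
    rw [sum_sum_sq_annihilator_mul_MG_inl]
    linarith
  have hP := sum_sq_mul_div_le_sum_sq_sub_columnSubmatrix_mul (MG G t) (colorColumns φ) A
    (annihilator t φ) (isDiag_annihilator_mul_transpose φ) fun k p hp => by
      obtain ⟨w, -, rfl⟩ := Finset.mem_map.mp hp
      exact annihilator_mul_MG_inl_self G φ k w
  refine le_trans ?_ hP
  rw [Fintype.sum_sum_type, Fintype.sum_unique (ι := Unit)]
  simp only [annihilator_mul_transpose_inr, div_one, sum_sq_annihilator_mul_MG_inr]
  have hpos : 0 < 1 + Fintype.card V * t ^ 6 := by positivity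
  calc _ ≤ (∑ i, ∑ c, (annihilator t φ * MG G t) (.inl i) c ^ 2) / (1 + Fintype.card V * t ^ 6)
        + Fintype.card G.edgeSet * t ^ 2 := by
        rw [add_comm]
        gcongr
    _ ≤ _ := by
        gcongr
        rw [Finset.sum_div]
        gcongr with i
        rw [Finset.sum_div]
        gcongr with c
        · exact zero_lt_one.trans_le (annihilator_mul_transpose_apply_mem_Icc φ _).1
        · exact (annihilator_mul_transpose_apply_mem_Icc φ _).2

lemma vecMul_MG_inl (y : V ⊕ Fin 3 ⊕ Unit → ℝ) (v : V) (i : Fin 3) :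
    (y ᵥ* MG G t) (.inl (v, i)) = y (.inl v) + t ^ 3 * y (.inr (.inl i)) := by
  simp [vecMul, dotProduct, Fintype.sum_sum_type, mul_comm]

lemma vecMul_MG_inr (y : V ⊕ Fin 3 ⊕ Unit → ℝ) {a b : V} (hab : G.Adj a b) :
    (y ᵥ* MG G t) (.inr ⟨s(a, b), hab⟩) =
      t ^ 2 * (y (.inl a) + y (.inl b)) + t ^ 5 * ∑ i, y (.inr (.inl i)) +
        t * y (.inr (.inr ())) := by
  simp only [vecMul, dotProduct, Fintype.sum_sum_type, MG_inl_inr, MG_inr_inl_inr,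
    MG_inr_inr_inr, mul_ite, mul_zero, sum_ite_mem_sym2 hab.ne, Fintype.sum_unique (ι := Unit),
    ← Finset.sum_mul]
  ring

lemma exists_vecMul_MG_eq_zero (ht : 0 < t) (𝒱 : Finset ((V × Fin 3) ⊕ G.edgeSet))
    (h𝒱 : 𝒱.card = Fintype.card V) {v₀ : V} (hv₀ : ∀ i, .inl (v₀, i) ∉ 𝒱) :
    ∃ y : V ⊕ Fin 3 ⊕ Unit → ℝ, y ≠ 0 ∧ (∀ i, y (.inr (.inl i)) = 0) ∧
      (∀ p ∈ 𝒱, (y ᵥ* MG G t) p = 0) ∧ y (.inr (.inr ())) ^ 2 ≤ 2 * t ^ 2 * (y ⬝ᵥ y) := by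
  by_cases hE : ∃ e, .inr e ∈ 𝒱
  · obtain ⟨⟨e, he⟩, he𝒱⟩ := hE
    -- `n + 1` unknowns on the vertex rows and `ε`, against the `n` selected columns
    obtain ⟨y, hy0, hyT, hy𝒱⟩ := exists_ne_zero_vecMul_eq_zero (MG G t)
      ((univ : Finset V).disjSum {.inr ()}) 𝒱
      (by rw [card_disjSum, card_univ, card_singleton, h𝒱]; omega)
    have hcol : ∀ i, y (.inr (.inl i)) = 0 := fun i => hyT _ (by simp)
    refine ⟨y, hy0, hcol, hy𝒱, ?_⟩
    induction e using Sym2.ind with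
    | _ a b =>
    have hε := hy𝒱 _ he𝒱
    rw [vecMul_MG_inr G y (hab := he)] at hε
    simp only [hcol, Finset.sum_const_zero, mul_zero, add_zero] at hε
    have hε' : y (.inr (.inr ())) = -t * (y (.inl a) + y (.inl b)) := by
      apply mul_left_cancel₀ ht.ne'
      linear_combination hε
    have hab : y (.inl a) * y (.inl a) + y (.inl b) * y (.inl b) ≤ y ⬝ᵥ y := by
      have := Finset.sum_le_univ_sum_of_nonneg (s := {.inl a, .inl b})
        fun r => mul_self_nonneg (y r)
      rwa [Finset.sum_pair (Sum.inl_injective.ne (G.ne_of_adj he))] at this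
    rw [hε']
    nlinarith [sq_nonneg (y (.inl a) - y (.inl b)), sq_nonneg t]
  · refine ⟨Pi.single (.inl v₀) 1, fun h => by simpa using congrFun h (.inl v₀), fun i => by simp,
      ?_, by simp; positivity⟩
    rintro (⟨v, i⟩ | e) hp
    · rw [single_one_vecMul]
      simp only [row_apply, MG_inl_inl, ite_eq_right_iff, one_ne_zero, imp_false]
      rintro rfl
      exact hv₀ i hp
    · exact absurd ⟨e, hp⟩ hE

lemma one_sub_le_sum_sq_MG_sub (ht : 0 < t) (𝒱 : Finset ((V × Fin 3) ⊕ G.edgeSet))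
    (h𝒱 : 𝒱.card = Fintype.card V) {v₀ : V} (hv₀ : ∀ i, .inl (v₀, i) ∉ 𝒱)
    (A : Matrix 𝒱 ((V × Fin 3) ⊕ G.edgeSet) ℝ) :
    1 - 2 * t ^ 2 ≤ ∑ r, ∑ c, (MG G t - columnSubmatrix (MG G t) 𝒱 * A) r c ^ 2 := by
  obtain ⟨y, hy0, hcol, hy𝒱, hε⟩ := exists_vecMul_MG_eq_zero G ht 𝒱 h𝒱 hv₀
  have hyy : 0 < y ⬝ᵥ y := (Finset.sum_nonneg fun r _ => mul_self_nonneg (y r)).lt_of_ne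
    (Ne.symm (dotProduct_self_eq_zero.not.mpr hy0))
  have hsplit : y ⬝ᵥ y = ∑ v, y (.inl v) ^ 2 + y (.inr (.inr ())) ^ 2 := by
    simp [dotProduct, Fintype.sum_sum_type, hcol, sq]
  have hcols : ∑ v, y (.inl v) ^ 2 ≤ ∑ c, (y ᵥ* MG G t) c ^ 2 := by
    calc ∑ v, y (.inl v) ^ 2
        = ∑ c ∈ colorColumns (fun _ => (0 : Fin 3)), (y ᵥ* MG G t) c ^ 2 := by
          simp only [sum_colorColumns, vecMul_MG_inl, hcol, mul_zero, add_zero]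
      _ ≤ _ := Finset.sum_le_univ_sum_of_nonneg fun _ => sq_nonneg _
  refine le_trans ?_ (sum_sq_vecMul_div_le_sum_sq_sub_columnSubmatrix_mul _ 𝒱 A y hy𝒱)
  rw [le_div_iff₀ hyy]
  nlinarith

theorem le_sum_sq_MG_sub_of_not_colorable
    (hG : ¬ ∃ φ : V → Fin 3, ∀ u v, G.Adj u v → φ u ≠ φ v) (ht : 0 < t)
    (hA : 4 * Fintype.card V ^ 2 * t ^ 2 +
      Fintype.card V * (Fintype.card G.edgeSet + 1) * t ^ 6 ≤ 1)
    (hB : Fintype.card G.edgeSet * t ^ 2 + 4 * Fintype.card V * t ^ 6 +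
      (Fintype.card G.edgeSet + 1) * t ^ 10 + 2 * t ^ 2 ≤ 1)
    (𝒱 : Finset ((V × Fin 3) ⊕ G.edgeSet)) (h𝒱 : 𝒱.card = Fintype.card V)
    (A : Matrix 𝒱 ((V × Fin 3) ⊕ G.edgeSet) ℝ) :
    Fintype.card G.edgeSet * t ^ 2 + 4 * Fintype.card V * t ^ 6 +
        Fintype.card G.edgeSet * t ^ 10 + t ^ 10 ≤
      ∑ r, ∑ c, (MG G t - columnSubmatrix (MG G t) 𝒱 * A) r c ^ 2 := by
  rcases eq_colorColumns_or_exists_forall_inl_notMem 𝒱 h𝒱 with ⟨φ, rfl⟩ | ⟨v₀, hv₀⟩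
  · have hφ : ∃ u v, G.Adj u v ∧ φ u = φ v := by
      by_contra h
      exact hG ⟨φ, fun u v huv => fun h' => h ⟨u, v, huv, h'⟩⟩
    refine le_trans ?_ (le_sum_sq_MG_sub_colorColumns_mul G φ hφ A)
    have hpos : 0 < 1 + Fintype.card V * t ^ 6 := by positivity
    rw [add_assoc (_ * t ^ 2), add_assoc (_ * t ^ 2), add_le_add_iff_left, le_div_iff₀ hpos]
    nlinarith [pow_pos ht 10]
  · linarith [one_sub_le_sum_sq_MG_sub G ht 𝒱 h𝒱 hv₀ A]

end Reduction

lemma reduction_parameter_bounds {n m t : ℝ} (hn : 0 ≤ n) (hm : 1 ≤ m)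
    (ht : t = 1 / (4 * (m + n) ^ 3)) :
    0 < t ∧ 4 * n ^ 2 * t ^ 2 + n * (m + 1) * t ^ 6 ≤ 1 ∧
      m * t ^ 2 + 4 * n * t ^ 6 + (m + 1) * t ^ 10 + 2 * t ^ 2 ≤ 1 := by
  have hN : 1 ≤ m + n := by linarith
  have ht0 : 0 < t := by rw [ht]; positivity
  have hNt : (m + n) * t ≤ 1 / 4 := by
    rw [ht, mul_one_div, div_le_div_iff₀ (by positivity) (by norm_num)]
    nlinarith [pow_le_pow_left₀ zero_le_one hN 2]
  have ht1 : t ≤ 1 / 4 := by nlinarith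
  have hnt : n * t ≤ 1 / 4 := by nlinarith
  have hmt : (m + 1) * t ≤ 1 / 2 := by nlinarith
  have htk : ∀ k, t ^ (k + 1) ≤ t := fun k => pow_le_of_le_one ht0.le (by linarith) (by omega)
  refine ⟨ht0, ?_, ?_⟩
  · have h1 : (n * t) * ((m + 1) * t) ≤ 1 / 4 * (1 / 2) :=
      mul_le_mul hnt hmt (by positivity) (by norm_num)
    have h2 : t ^ 4 ≤ 1 := pow_le_one₀ ht0.le (by linarith)
    nlinarith [mul_le_mul h1 h2 (by positivity) (by norm_num), mul_nonneg hn ht0.le]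
  · have hm' : m * t ≤ 1 / 2 := by nlinarith
    have h1 : (m * t) * t ≤ 1 / 2 * t := mul_le_mul_of_nonneg_right hm' ht0.le
    have h2 : (n * t) * t ^ 5 ≤ 1 / 4 * t := mul_le_mul hnt (htk 4) (by positivity) (by norm_num)
    have h3 : ((m + 1) * t) * t ^ 9 ≤ 1 / 2 * t :=
      mul_le_mul hmt (htk 8) (by positivity) (by norm_num)
    nlinarith

theorem column_subset_selection_three_coloring_general
    {V : Type*} [Fintype V] [DecidableEq V] (G : SimpleGraph V) [DecidableRel G.Adj]
    (n m : ℕ) (hn : n = Fintype.card V) (hm : m = G.edgeFinset.card)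
    (hm1 : 1 ≤ m)
    (t : ℝ) (ht : t = 1 / (4 * (m + n) ^ 3)) :
    (∃ φ : V → Fin 3, ∀ u v : V, G.Adj u v → φ u ≠ φ v) ↔
      delta (MG G t) n ≤
        Real.sqrt (m * t ^ 2 + 4 * n * t ^ 6 + m * t ^ 10) := by
  rw [SimpleGraph.edgeFinset_card] at hm
  subst hn hm
  obtain ⟨ht0, hA, hB⟩ :=
    reduction_parameter_bounds (Nat.cast_nonneg _) (by exact_mod_cast hm1) ht
  constructor
  · rintro ⟨φ, hφ⟩
    calc delta (MG G t) (Fintype.card V)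
        ≤ frob (MG G t - columnSubmatrix (MG G t) (colorColumns φ) * coloringCoeffs G φ t) :=
          card_colorColumns (β := G.edgeSet) φ ▸ delta_le_frob _ _ _
      _ = _ := by rw [frob, sum_sq_MG_sub_mul_coloringCoeffs G φ hφ]
  · intro hδ
    by_contra hG
    have hlow := le_delta (MG G t) (by simp [Fintype.card_sum]; omega) fun 𝒱 h𝒱 A =>
      Real.sqrt_le_sqrt (le_sum_sq_MG_sub_of_not_colorable G hG ht0 hA hB 𝒱 h𝒱 A)
    have hlt := Real.sqrt_lt_sqrt (by positivity) (lt_add_of_pos_right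
      ((Fintype.card G.edgeSet : ℝ) * t ^ 2 + 4 * Fintype.card V * t ^ 6 +
        Fintype.card G.edgeSet * t ^ 10) (pow_pos ht0 10))
    exact (hlow.trans hδ).not_gt hlt

/-- A graph `G` with `n ≥ 1` vertices and `m ≥ 1` edges has a three-coloring if and only if
`δ_n(M(G)) ≤ √(m t² + 4 n t⁶ + m t¹⁰)`, where `t = 1/(4(m+n)³)`. -/
theorem column_subset_selection_three_coloring
    {V : Type*} [Fintype V] [DecidableEq V] (G : SimpleGraph V) [DecidableRel G.Adj]
    (n m : ℕ) (hn : n = Fintype.card V) (hm : m = G.edgeFinset.card)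
    (hn1 : 1 ≤ n) (hm1 : 1 ≤ m)
    (t : ℝ) (ht : t = 1 / (4 * (m + n) ^ 3)) :
    (∃ φ : V → Fin 3, ∀ u v : V, G.Adj u v → φ u ≠ φ v) ↔
      delta (MG G t) n ≤
        Real.sqrt (m * t ^ 2 + 4 * n * t ^ 6 + m * t ^ 10) :=
  column_subset_selection_three_coloring_general G n m hn hm hm1 t ht
end

section
/- If there exists a vertex v ∈ V such that the n-element column-index set 𝒱 is disjoint from E ∪ {(v,1),(v,2),(v,3)}, then for every matrix A with rows indexed by 𝒱 and columns indexed by (V × {1,2,3}) ⊔ E one has ‖M(G) − SA‖ > √(m t² + 4 n t⁶ + m t¹⁰). -/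
open Matrix

/-- If the `n`-element column-index set `𝒱` is disjoint from `E ∪ {(v,1),(v,2),(v,3)}` for
some vertex `v`, then for every `A` one has `‖M(G) - S A‖ > √(m t² + 4 n t⁶ + m t¹⁰)`. -/
theorem disjoint_column_set_exceeds_threshold
    {V : Type*} [Fintype V] [DecidableEq V] (G : SimpleGraph V) [DecidableRel G.Adj]
    (n m : ℕ) (hn : n = Fintype.card V) (hm : m = G.edgeFinset.card)
    (hn1 : 1 ≤ n) (hm1 : 1 ≤ m)
    (t : ℝ) (ht : t = 1 / (4 * (m + n) ^ 3))
    (𝒱 : Finset ((V × Fin 3) ⊕ G.edgeSet)) (hcard : 𝒱.card = n)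
    (hdisj : ∃ v : V, (∀ i : Fin 3, Sum.inl (v, i) ∉ 𝒱) ∧ ∀ e : G.edgeSet, Sum.inr e ∉ 𝒱)
    (A : Matrix 𝒱 ((V × Fin 3) ⊕ G.edgeSet) ℝ) :
    frob (MG G t - Matrix.of (fun r (c : 𝒱) => MG G t r c.val) * A) >
      Real.sqrt (m * t ^ 2 + 4 * n * t ^ 6 + m * t ^ 10) := by
  obtain ⟨v, hv, hE⟩ := hdisj
  set X := MG G t - Matrix.of (fun r (c : 𝒱) => MG G t r c.val) * A with hX
  -- numeric bounds
  have hm1' : (1:ℝ) ≤ (m:ℝ) := by exact_mod_cast hm1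
  have hn1' : (1:ℝ) ≤ (n:ℝ) := by exact_mod_cast hn1
  have hs2 : (2 : ℝ) ≤ (m : ℝ) + (n : ℝ) := by linarith
  have hspos : (0:ℝ) < 4 * ((m:ℝ) + n) ^ 3 := by positivity
  have ht0 : 0 < t := by rw [ht]; positivity
  have hsq : (4:ℝ) ≤ ((m:ℝ) + n) ^ 2 := by nlinarith
  have hcube : (8:ℝ) ≤ ((m:ℝ) + n) ^ 3 := by nlinarith
  have ht32 : t ≤ 1 / 32 := by
    rw [ht, div_le_div_iff₀ hspos (by norm_num)]
    nlinarith
  have hmt : (m:ℝ) * t ≤ 1 / 16 := by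
    rw [ht, mul_one_div, div_le_div_iff₀ hspos (by norm_num)]
    nlinarith
  have hnt : (n:ℝ) * t ≤ 1 / 16 := by
    rw [ht, mul_one_div, div_le_div_iff₀ hspos (by norm_num)]
    nlinarith
  have hrhs : Real.sqrt ((m:ℝ) * t ^ 2 + 4 * n * t ^ 6 + m * t ^ 10) < 1 := by
    rw [show (1:ℝ) = Real.sqrt 1 by simp]
    apply Real.sqrt_lt_sqrt (by positivity)
    have h5 : t ^ 5 ≤ (1/32) ^ 5 := pow_le_pow_left₀ ht0.le ht32 5
    have h9 : t ^ 9 ≤ (1/32) ^ 9 := pow_le_pow_left₀ ht0.le ht32 9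
    have e1 : (m:ℝ) * t ^ 2 = ((m:ℝ) * t) * t := by ring
    have e2 : 4 * (n:ℝ) * t ^ 6 = 4 * (((n:ℝ) * t) * t ^ 5) := by ring
    have e3 : (m:ℝ) * t ^ 10 = ((m:ℝ) * t) * t ^ 9 := by ring
    have b1 : ((m:ℝ) * t) * t ≤ (1/16) * (1/32) :=
      mul_le_mul hmt ht32 ht0.le (by norm_num)
    have b2 : ((n:ℝ) * t) * t ^ 5 ≤ (1/16) * ((1/32)^5) :=
      mul_le_mul hnt h5 (by positivity) (by norm_num)
    have b3 : ((m:ℝ) * t) * t ^ 9 ≤ (1/16) * ((1/32)^9) :=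
      mul_le_mul hmt h9 (by positivity) (by norm_num)
    rw [e1, e2, e3]
    norm_num at b1 b2 b3 ⊢
    linarith
  -- the key entry
  have hzero : ∀ k : 𝒱, MG G t (Sum.inl v) (k : (V × Fin 3) ⊕ G.edgeSet) = 0 := by
    rintro ⟨c, hc⟩
    cases c with
    | inl p =>
      obtain ⟨u, j⟩ := p
      simp only [MG]
      by_cases huv : v = u
      · subst huv; exact absurd hc (hv j)
      · simp [huv]
    | inr e => exact absurd hc (hE e)
  have hkey : X (Sum.inl v) (Sum.inl (v, 0)) = 1 := by
    have hmul : (Matrix.of (fun r (c : 𝒱) => MG G t r c.val) * A)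
        (Sum.inl v) (Sum.inl (v, 0)) = 0 := by
      rw [Matrix.mul_apply]
      apply Finset.sum_eq_zero
      intro k _
      simp [hzero k]
    rw [hX, Matrix.sub_apply, hmul]
    simp [MG]
  have hsum : (1:ℝ) ≤ ∑ i, ∑ j, X i j ^ 2 := by
    have h1 : X (Sum.inl v) (Sum.inl (v, 0)) ^ 2 ≤ ∑ j, X (Sum.inl v) j ^ 2 :=
      Finset.single_le_sum (f := fun j => X (Sum.inl v) j ^ 2)
        (fun j _ => sq_nonneg _) (Finset.mem_univ (Sum.inl (v, 0)))
    have h2 : ∑ j, X (Sum.inl v) j ^ 2 ≤ ∑ i, ∑ j, X i j ^ 2 :=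
      Finset.single_le_sum (f := fun i => ∑ j, X i j ^ 2)
        (fun i _ => Finset.sum_nonneg fun j _ => sq_nonneg _)
        (Finset.mem_univ (Sum.inl v))
    rw [hkey] at h1
    linarith
  have hfrob : (1:ℝ) ≤ frob X := by
    have := Real.sqrt_le_sqrt hsum
    simpa [frob] using this
  exact lt_of_lt_of_le hrhs hfrob
end

section
/- If the row of S indexed by a vertex v ∈ V is zero (equivalently, the n-element column-index set 𝒱 is disjoint from E ∪ {(v,1),(v,2),(v,3)}), then for every matrix A with rows indexed by 𝒱 and columns indexed by (V × {1,2,3}) ⊔ E one has ‖M(G) − SA‖ ≥ √3. -/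
open Matrix

/-- If the row of `S` indexed by a vertex `v` is zero, then for every `A` one has
`‖M(G) - S A‖ ≥ √3`. -/
theorem zero_row_ge_sqrt_three
    {V : Type*} [Fintype V] [DecidableEq V] (G : SimpleGraph V) [DecidableRel G.Adj]
    (n m : ℕ) (hn : n = Fintype.card V) (hm : m = G.edgeFinset.card)
    (hn1 : 1 ≤ n) (hm1 : 1 ≤ m)
    (t : ℝ) (ht : t = 1 / (4 * (m + n) ^ 3))
    (𝒱 : Finset ((V × Fin 3) ⊕ G.edgeSet)) (hcard : 𝒱.card = n)
    (v : V) (hrow : ∀ c : 𝒱, MG G t (Sum.inl v) c.val = 0)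
    (A : Matrix 𝒱 ((V × Fin 3) ⊕ G.edgeSet) ℝ) :
    frob (MG G t - Matrix.of (fun r (c : 𝒱) => MG G t r c.val) * A) ≥
      Real.sqrt 3 := by
  set X := MG G t - Matrix.of (fun r (c : 𝒱) => MG G t r c.val) * A with hX
  have hentry : ∀ i : Fin 3, X (Sum.inl v) (Sum.inl (v, i)) = 1 := by
    intro i
    have hmul : (Matrix.of (fun r (c : 𝒱) => MG G t r c.val) * A)
        (Sum.inl v) (Sum.inl (v, i)) = 0 := by
      simp only [Matrix.mul_apply, Matrix.of_apply]
      apply Finset.sum_eq_zero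
      intro c _
      rw [hrow c, zero_mul]
    rw [hX, Matrix.sub_apply, hmul, sub_zero]
    simp [MG]
  have h3 : (3 : ℝ) ≤ ∑ i, ∑ j, X i j ^ 2 := by
    have h1 : ∑ j, X (Sum.inl v) j ^ 2 ≤ ∑ i, ∑ j, X i j ^ 2 := by
      apply Finset.single_le_sum (f := fun i => ∑ j, X i j ^ 2)
      · intro i _
        exact Finset.sum_nonneg fun j _ => sq_nonneg _
      · exact Finset.mem_univ _
    have h2 : (3 : ℝ) ≤ ∑ j, X (Sum.inl v) j ^ 2 := by
      have hsub : ∑ i : Fin 3, X (Sum.inl v) (Sum.inl (v, i)) ^ 2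
          ≤ ∑ j, X (Sum.inl v) j ^ 2 := by
        have := Finset.sum_le_sum_of_subset_of_nonneg
          (s := Finset.image (fun i : Fin 3 => (Sum.inl (v, i) : (V × Fin 3) ⊕ G.edgeSet))
            Finset.univ)
          (t := Finset.univ)
          (f := fun j => X (Sum.inl v) j ^ 2)
          (Finset.subset_univ _)
          (fun j _ _ => sq_nonneg _)
        rwa [Finset.sum_image (by intro a _ b _ h; simpa using h)] at this
      calc (3 : ℝ) = ∑ i : Fin 3, X (Sum.inl v) (Sum.inl (v, i)) ^ 2 := by
            simp [hentry]
        _ ≤ _ := hsub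
    linarith
  have : Real.sqrt 3 ≤ Real.sqrt (∑ i, ∑ j, X i j ^ 2) := Real.sqrt_le_sqrt h3
  exact this
end

section
/- If the n-element column-index set 𝒱 contains some edge index e ∈ E, then for every matrix A with rows indexed by 𝒱 and columns indexed by (V × {1,2,3}) ⊔ E one has ‖M(G) − SA‖ > √(m t² + 4 n t⁶ + m t¹⁰). -/
open Matrix

/-! Let `U` be the set of vertices none of whose three columns lies in `𝒱`. As `|𝒱| = n`, at most
`n - |U|` vertices are covered, so `𝒱` contains at most `|U|` edge columns. Hence there are
`a : V → ℝ` supported on `U` and `c : ℝ` with `a u + a w + c = 0` for every selected edge `uw`, and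
`a ≠ 0` because some edge is selected. The row vector `x = (a, 0, t c)` annihilates every selected
column, so `xᵀ (M - S A) = xᵀ M`, whose entry at each of the `3n` vertex columns `(v, i)` is
`a v`. By Cauchy–Schwarz `‖M - S A‖² ≥ 3 ‖a‖² / ‖x‖² ≥ 3 / 2`, since `c` is minus a sum of
values of `a`, so `‖x‖² = ‖a‖² + t² c² ≤ (1 + n t²) ‖a‖² ≤ 2 ‖a‖²`; the threshold is far below
`3 / 2`. -/

open Finset

section TestVector

variable {ι κ μ : Type*} [Fintype ι] [Fintype κ] [Fintype μ]

theorem sum_sq_vecMul_le (x : ι → ℝ) (R : Matrix ι κ ℝ) :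
    ∑ j, (x ᵥ* R) j ^ 2 ≤ (∑ i, x i ^ 2) * ∑ i, ∑ j, R i j ^ 2 := by
  rw [sum_comm (f := fun i j => R i j ^ 2), mul_sum]
  exact sum_le_sum fun j _ => sum_mul_sq_le_sq_mul_sq _ _ _

theorem sum_sq_vecMul_le_of_vecMul_eq_zero (x : ι → ℝ) (M : Matrix ι κ ℝ) {S : Matrix ι μ ℝ}
    (hx : x ᵥ* S = 0) (A : Matrix μ κ ℝ) :
    ∑ j, (x ᵥ* M) j ^ 2 ≤ (∑ i, x i ^ 2) * ∑ i, ∑ j, (M - S * A) i j ^ 2 := by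
  have hA : x ᵥ* (M - S * A) = x ᵥ* M := by
    rw [vecMul_sub, ← vecMul_vecMul, hx, zero_vecMul, sub_zero]
  simpa only [hA] using sum_sq_vecMul_le x (M - S * A)

end TestVector

theorem card_toRight_le_card_compl_image_fst {V ι E : Type*} [Fintype V] [DecidableEq V]
    (𝒱 : Finset ((V × ι) ⊕ E)) (h : #𝒱 ≤ Fintype.card V) :
    #𝒱.toRight ≤ #(univ \ 𝒱.toLeft.image Prod.fst) := by
  rw [card_sdiff_of_subset (subset_univ _), card_univ]
  have := card_image_le (s := 𝒱.toLeft) (f := Prod.fst)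
  have := card_toLeft_add_card_toRight (u := 𝒱)
  omega

theorem exists_incidence_balanced {V : Type*} [Fintype V] [DecidableEq V] (U : Finset V)
    (F : Finset (Sym2 V)) (hF : #F ≤ #U) (hF₀ : F.Nonempty) :
    ∃ (a : V → ℝ) (c : ℝ), (∀ v ∉ U, a v = 0) ∧
      (∀ e ∈ F, ∑ v, (if v ∈ e then a v else 0) + c = 0) ∧ a ≠ 0 := by
  -- `|V| - |U| + |F| < |V| + 1` equations in the unknowns `(a, c)`: rows in `Uᶜ` make `a` vanish
  -- off `U`, rows in `F` are the edge equations.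
  let B : Matrix (↥Uᶜ ⊕ F) (V ⊕ Unit) ℝ :=
    Sum.elim (fun v => Pi.single (.inl v) 1)
      (fun e => Sum.elim (fun v => if v ∈ (e : Sym2 V) then 1 else 0) 1)
  obtain ⟨y, hy, hy₀⟩ : ∃ y ∈ LinearMap.ker B.mulVecLin, y ≠ 0 := by
    refine Submodule.exists_mem_ne_zero_of_ne_bot (LinearMap.ker_ne_bot_of_finrank_lt ?_)
    simp only [Module.finrank_fintype_fun_eq_card, Fintype.card_sum, Fintype.card_coe,
      card_compl, Fintype.card_unit]
    have := card_le_univ U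
    omega
  have hB : ∀ r, (B *ᵥ y) r = 0 := fun r => congrFun hy r
  refine ⟨fun v => y (.inl v), y (.inr ()), fun v hv => ?_, fun e he => ?_, fun ha => hy₀ ?_⟩
  · simpa [B, mulVec] using hB (.inl ⟨v, mem_compl.2 hv⟩)
  · simpa [B, mulVec, dotProduct, Fintype.sum_sum_type, ite_mul] using hB (.inr ⟨e, he⟩)
  · obtain ⟨e, he⟩ := hF₀
    ext (v | _)
    · exact funext_iff.1 ha v
    · simpa [B, mulVec, dotProduct, Fintype.sum_sum_type, funext_iff.1 ha] using hB (.inr ⟨e, he⟩)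

section Probe

variable {V : Type*}

def probe (t : ℝ) (a : V → ℝ) (c : ℝ) : V ⊕ Fin 3 ⊕ Unit → ℝ :=
  Sum.elim a (Sum.elim 0 fun _ => t * c)

variable [Fintype V] (t : ℝ) (a : V → ℝ) (c : ℝ)

theorem sum_sq_probe : ∑ r, probe t a c r ^ 2 = ∑ v, a v ^ 2 + t ^ 2 * c ^ 2 := by
  simp [probe, Fintype.sum_sum_type, mul_pow]

variable [DecidableEq V] (G : SimpleGraph V) [DecidableRel G.Adj]

theorem probe_vecMul_MG_inl (w : V) (i : Fin 3) :
    (probe t a c ᵥ* MG G t) (.inl (w, i)) = a w := by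
  simp [probe, MG, vecMul, dotProduct, Fintype.sum_sum_type]

theorem probe_vecMul_MG_inr (e : G.edgeSet) :
    (probe t a c ᵥ* MG G t) (.inr e) =
      t ^ 2 * (∑ v, (if v ∈ (e : Sym2 V) then a v else 0) + c) := by
  simp [probe, MG, vecMul, dotProduct, Fintype.sum_sum_type, mul_add, mul_sum, mul_comm,
    mul_left_comm, sq]

theorem three_mul_sum_sq_le_sum_sq_probe_vecMul_MG :
    3 * ∑ v, a v ^ 2 ≤ ∑ j, (probe t a c ᵥ* MG G t) j ^ 2 := by
  rw [Fintype.sum_sum_type, Fintype.sum_prod_type]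
  simp only [probe_vecMul_MG_inl, sum_const, card_univ, Fintype.card_fin, nsmul_eq_mul,
    Nat.cast_ofNat, ← mul_sum]
  have : 0 ≤ ∑ e : G.edgeSet, (probe t a c ᵥ* MG G t) (.inr e) ^ 2 := by positivity
  linarith

theorem probe_vecMul_submatrix_eq_zero (𝒱 : Finset ((V × Fin 3) ⊕ G.edgeSet))
    (ha : ∀ w i, .inl (w, i) ∈ 𝒱 → a w = 0)
    (hc : ∀ e : G.edgeSet, .inr e ∈ 𝒱 → (∑ v, if v ∈ (e : Sym2 V) then a v else 0) + c = 0) :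
    probe t a c ᵥ* Matrix.of (fun r (col : 𝒱) => MG G t r col.val) = 0 := by
  funext ⟨col, hcol⟩
  change (probe t a c ᵥ* MG G t) col = 0
  rcases col with ⟨w, i⟩ | e
  · rw [probe_vecMul_MG_inl, ha w i hcol]
  · rw [probe_vecMul_MG_inr, hc e hcol, mul_zero]

end Probe

theorem sq_sum_ite_mem_le {V : Type*} [Fintype V] [DecidableEq V] (a : V → ℝ) (e : Sym2 V) :
    (∑ v, if v ∈ e then a v else 0) ^ 2 ≤ Fintype.card V * ∑ v, a v ^ 2 := by
  refine (sq_sum_le_card_mul_sum_sq).trans (mul_le_mul_of_nonneg_left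
    (sum_le_sum fun v _ => ?_) (by positivity))
  split_ifs <;> simp [sq_nonneg]

theorem threshold_bounds {m n t : ℝ} (hm : 0 ≤ m) (hn : 1 ≤ n) (ht : t = 1 / (4 * (m + n) ^ 3)) :
    m * t ^ 2 + 4 * n * t ^ 6 + m * t ^ 10 < 3 / 2 ∧ n * t ^ 2 ≤ 1 / 16 := by
  have hst : (m + n) * t ≤ 1 / 4 := by
    rw [ht, mul_one_div, div_le_div_iff₀ (by positivity) (by norm_num)]
    nlinarith [pow_le_pow_left₀ (by linarith) (show 1 ≤ m + n by linarith) 2]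
  have ht₀ : 0 < t := by rw [ht]; positivity
  have ht₁ : t ≤ 1 / 4 := by nlinarith
  have ht₆ : t ^ 6 ≤ t ^ 2 := pow_le_pow_of_le_one ht₀.le (by linarith) (by norm_num)
  have ht₁₀ : t ^ 10 ≤ t ^ 2 := pow_le_pow_of_le_one ht₀.le (by linarith) (by norm_num)
  have hmt : m * t ^ 2 ≤ 1 / 16 := by nlinarith
  have hnt : n * t ^ 2 ≤ 1 / 16 := by nlinarith
  constructor <;> nlinarith

theorem edge_column_exceeds_threshold_general
    {V : Type*} [Fintype V] [DecidableEq V] (G : SimpleGraph V) [DecidableRel G.Adj]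
    (n m : ℕ) (hn : n = Fintype.card V)
    (hn1 : 1 ≤ n)
    (t : ℝ) (ht : t = 1 / (4 * (m + n) ^ 3))
    (𝒱 : Finset ((V × Fin 3) ⊕ G.edgeSet)) (hcard : 𝒱.card = n)
    (he : ∃ e : G.edgeSet, Sum.inr e ∈ 𝒱)
    (A : Matrix 𝒱 ((V × Fin 3) ⊕ G.edgeSet) ℝ) :
    frob (MG G t - Matrix.of (fun r (c : 𝒱) => MG G t r c.val) * A) >
      Real.sqrt (m * t ^ 2 + 4 * n * t ^ 6 + m * t ^ 10) := by
  obtain ⟨e₀, he₀⟩ := he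
  obtain ⟨a, c, ha_U, ha_F, ha⟩ :=
    exists_incidence_balanced (univ \ 𝒱.toLeft.image Prod.fst)
      (𝒱.toRight.map (Function.Embedding.subtype _))
      (by simpa using card_toRight_le_card_compl_image_fst 𝒱 (by rw [hcard, hn]))
      ⟨e₀, mem_map_of_mem _ (mem_toRight.2 he₀)⟩
  have hF : ∀ e : G.edgeSet, .inr e ∈ 𝒱 → (∑ v, if v ∈ (e : Sym2 V) then a v else 0) + c = 0 :=
    fun e he => ha_F _ (mem_map_of_mem _ (mem_toRight.2 he))
  have hS := probe_vecMul_submatrix_eq_zero t a c G 𝒱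
    (fun w _ hw => ha_U w fun hU => (mem_sdiff.1 hU).2 (mem_image_of_mem _ (mem_toLeft.2 hw))) hF
  have hR := sum_sq_vecMul_le_of_vecMul_eq_zero _ (MG G t) hS A
  rw [sum_sq_probe] at hR
  have hc : c ^ 2 ≤ n * ∑ v, a v ^ 2 := by
    rw [eq_neg_of_add_eq_zero_right (hF e₀ he₀), neg_sq, hn]
    exact sq_sum_ite_mem_le a e₀
  have ha₀ : 0 < ∑ v, a v ^ 2 := by
    obtain ⟨v, hv⟩ := Function.ne_iff.1 ha
    exact sum_pos' (fun v _ => sq_nonneg _) ⟨v, mem_univ v, sq_pos_iff.2 hv⟩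
  obtain ⟨hthr, hnt⟩ := threshold_bounds (m := m) (n := n) (by positivity)
    (by exact_mod_cast hn1) (by exact_mod_cast ht)
  have hX : ∑ v, a v ^ 2 + t ^ 2 * c ^ 2 ≤ 2 * ∑ v, a v ^ 2 := by
    nlinarith [mul_le_mul_of_nonneg_left hc (sq_nonneg t)]
  unfold frob
  apply Real.sqrt_lt_sqrt (by positivity)
  nlinarith [three_mul_sum_sq_le_sum_sq_probe_vecMul_MG t a c G,
    mul_le_mul_of_nonneg_right hX (by positivity : (0 : ℝ) ≤ ∑ i, ∑ j,
      (MG G t - Matrix.of (fun r (c : 𝒱) => MG G t r c.val) * A) i j ^ 2)]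

/-- If the `n`-element column-index set `𝒱` contains some edge index `e ∈ E`, then for every
`A` one has `‖M(G) - S A‖ > √(m t² + 4 n t⁶ + m t¹⁰)`. -/
theorem edge_column_exceeds_threshold
    {V : Type*} [Fintype V] [DecidableEq V] (G : SimpleGraph V) [DecidableRel G.Adj]
    (n m : ℕ) (hn : n = Fintype.card V) (hm : m = G.edgeFinset.card)
    (hn1 : 1 ≤ n) (hm1 : 1 ≤ m)
    (t : ℝ) (ht : t = 1 / (4 * (m + n) ^ 3))
    (𝒱 : Finset ((V × Fin 3) ⊕ G.edgeSet)) (hcard : 𝒱.card = n)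
    (he : ∃ e : G.edgeSet, Sum.inr e ∈ 𝒱)
    (A : Matrix 𝒱 ((V × Fin 3) ⊕ G.edgeSet) ℝ) :
    frob (MG G t - Matrix.of (fun r (c : 𝒱) => MG G t r c.val) * A) >
      Real.sqrt (m * t ^ 2 + 4 * n * t ^ 6 + m * t ^ 10) :=
  edge_column_exceeds_threshold_general G n m hn hn1 t ht 𝒱 hcard he A
end

section
/- If there exists a matrix A with rows indexed by the n-element column-index set 𝒱 and columns indexed by (V × {1,2,3}) ⊔ E such that ‖M(G) − SA‖ ≤ √(m t² + 4 n t⁶ + m t¹⁰), then there exists a map ψ : V → {1,2,3} such that 𝒱 = {(v, ψ(v)) : v ∈ V}. -/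
open Matrix

/-!
Suppose some vertex `v₀` has none of its columns `(v₀, i)` in `𝒱`, and let `W ∋ v₀` be the set of
all such vertices. Restrict every column to the rows `W ⊔ {ε}`. There the chosen vertex columns
vanish, so the columns of `S A` lie in the span `K` of the chosen edge columns, and `dim K ≤ |W|`
because `|𝒱| = n` leaves at least as many uncovered vertices as chosen edges. The columns `(v, 0)`,
`v ∈ W`, restrict to the unit vectors `e_v`, and for the orthonormal basis `(e_v)_{v ∈ W}, e_ε` the
squared distances to `K` add up to `dim Kᗮ = |W| + 1 - dim K`. A rescaled edge column has `t²` in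
at most two vertex rows, so `e_ε` lies within squared distance `2t²` of `K` (if no edge column is
chosen, `K = 0` and `|W| ≥ 1` serve instead). Hence the columns `(v, 0)` alone contribute at least
`1 - 2t²` to `‖M(G) - S A‖²`, more than `m t² + 4 n t⁶ + m t¹⁰`. So every vertex is covered, and
`|𝒱| = n` makes the cover a graph of a map.
-/

open Module Finset
open scoped RealInnerProductSpace

section

variable {E ι : Type*} [NormedAddCommGroup E] [InnerProductSpace ℝ E] [FiniteDimensional ℝ E]
  [Fintype ι]

theorem Submodule.trace_starProjection (K : Submodule ℝ E) :
    LinearMap.trace ℝ E K.starProjection = finrank ℝ K := by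
  have h := LinearMap.IsIdempotentElem.isProj_range _
    (ContinuousLinearMap.IsIdempotentElem.toLinearMap K.isIdempotentElem_starProjection)
  rw [h.trace, show LinearMap.range (K.starProjection : E →ₗ[ℝ] E) = K from
    K.range_starProjection]

theorem OrthonormalBasis.sum_norm_starProjection_sq (b : OrthonormalBasis ι ℝ E)
    (K : Submodule ℝ E) : ∑ i, ‖K.starProjection (b i)‖ ^ 2 = finrank ℝ K := by
  rw [← K.trace_starProjection, LinearMap.trace_eq_sum_inner _ b]
  refine Finset.sum_congr rfl fun i _ => ?_
  rw [real_inner_comm]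
  exact (K.re_inner_starProjection_eq_normSq (b i)).symm

theorem OrthonormalBasis.card_sub_finrank_le_sum_norm_sub_sq (b : OrthonormalBasis ι ℝ E)
    (K : Submodule ℝ E) {u : ι → E} (hu : ∀ i, u i ∈ K) :
    (Fintype.card ι : ℝ) - finrank ℝ K ≤ ∑ i, ‖b i - u i‖ ^ 2 := by
  have hcard : (Fintype.card ι : ℝ) - finrank ℝ K = finrank ℝ Kᗮ := by
    rw [← finrank_eq_card_basis b.toBasis, ← K.finrank_add_finrank_orthogonal]; push_cast; ring
  rw [hcard, ← b.sum_norm_starProjection_sq]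
  gcongr with i
  calc ‖Kᗮ.starProjection (b i)‖ = ‖Kᗮ.starProjection (b i - u i)‖ := by
        rw [map_sub, K.starProjection_orthogonal_apply_eq_zero (hu i), sub_zero]
    _ ≤ ‖b i - u i‖ := Kᗮ.norm_starProjection_apply_le _

end

theorem Fintype.sum_comp_le_sum_of_injective {α β : Type*} [Fintype α] [Fintype β]
    {f : α → β} (hf : Function.Injective f) {g : β → ℝ} (hg : ∀ b, 0 ≤ g b) :
    ∑ a, g (f a) ≤ ∑ b, g b := by
  simpa using sum_le_univ_sum_of_nonneg (s := univ.map ⟨f, hf⟩) hg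

namespace Matrix

variable {ρ κ σ ι : Type*}

def colVec (X : Matrix ρ κ ℝ) (f : ι → ρ) (c : κ) : EuclideanSpace ℝ ι :=
  WithLp.toLp 2 fun i => X (f i) c

@[simp]
theorem colVec_apply (X : Matrix ρ κ ℝ) (f : ι → ρ) (c : κ) (i : ι) :
    X.colVec f c i = X (f i) c := rfl

theorem norm_colVec_sq [Fintype ι] (X : Matrix ρ κ ℝ) (f : ι → ρ) (c : κ) :
    ‖X.colVec f c‖ ^ 2 = ∑ i, X (f i) c ^ 2 := by
  simp [EuclideanSpace.norm_sq_eq]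

theorem sum_norm_colVec_sq_le {ι' : Type*} [Fintype ρ] [Fintype κ] [Fintype ι] [Fintype ι']
    (X : Matrix ρ κ ℝ) {f : ι → ρ} {g : ι' → κ} (hf : Function.Injective f)
    (hg : Function.Injective g) :
    ∑ j, ‖X.colVec f (g j)‖ ^ 2 ≤ ∑ r, ∑ c, X r c ^ 2 := by
  simp only [norm_colVec_sq]
  rw [sum_comm]
  calc ∑ i, ∑ j, X (f i) (g j) ^ 2 ≤ ∑ i, ∑ c, X (f i) c ^ 2 :=
        sum_le_sum fun _ _ => Fintype.sum_comp_le_sum_of_injective hg fun _ => sq_nonneg _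
    _ ≤ ∑ r, ∑ c, X r c ^ 2 :=
        Fintype.sum_comp_le_sum_of_injective hf fun _ => sum_nonneg fun _ _ => sq_nonneg _

theorem colVec_sub (X Y : Matrix ρ κ ℝ) (f : ι → ρ) (c : κ) :
    (X - Y).colVec f c = X.colVec f c - Y.colVec f c := rfl

theorem colVec_mul [Fintype σ] (X : Matrix ρ σ ℝ) (A : Matrix σ κ ℝ) (f : ι → ρ) (c : κ) :
    (X * A).colVec f c = ∑ d, A d c • X.colVec f d := by
  ext i
  simp [mul_apply, mul_comm]

end Matrix

namespace Finset

variable {α β γ : Type*} [Fintype α] [DecidableEq α]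

theorem card_toRight_le_card_compl_image_fst {s : Finset ((α × β) ⊕ γ)}
    (hs : #s = Fintype.card α) : #s.toRight ≤ #(s.toLeft.image Prod.fst)ᶜ := by
  have := card_toLeft_add_card_toRight (u := s)
  have := card_image_le (s := s.toLeft) (f := Prod.fst)
  rw [card_compl]
  omega

theorem exists_eq_image_inl_of_card_eq [DecidableEq β] [DecidableEq γ]
    {s : Finset ((α × β) ⊕ γ)} (hs : #s = Fintype.card α) (h : ∀ a, ∃ b, Sum.inl (a, b) ∈ s) :
    ∃ ψ : α → β, s = univ.image fun a => Sum.inl (a, ψ a) := by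
  choose ψ hψ using h
  refine ⟨ψ, (eq_of_subset_of_card_le ?_ ?_).symm⟩
  · simpa [subset_iff] using hψ
  · rw [card_image_of_injective _ fun a b hab => by simp_all, card_univ, hs]

end Finset

theorem Sym2.card_toFinset_le_two {α : Type*} [DecidableEq α] (z : Sym2 α) :
    #z.toFinset ≤ 2 := by
  rw [Sym2.card_toFinset]; split_ifs <;> omega

def vertexOrEpsRow {V : Type*} (W : Finset V) : W ⊕ Unit → V ⊕ Fin 3 ⊕ Unit :=
  Sum.elim (fun v => Sum.inl v) fun _ => Sum.inr (Sum.inr ())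

theorem vertexOrEpsRow_injective {V : Type*} (W : Finset V) :
    Function.Injective (vertexOrEpsRow W) := by
  rintro (a | a) (b | b) h <;> simp [vertexOrEpsRow] at h
  · rw [h]
  · rfl

section Reduction

variable {V : Type*} [Fintype V] [DecidableEq V] {G : SimpleGraph V} [DecidableRel G.Adj]
  {t : ℝ}

theorem colVec_MG_inl_of_mem {W : Finset V} {v : V} (hv : v ∈ W) (i : Fin 3) :
    (MG G t).colVec (vertexOrEpsRow W) (Sum.inl (v, i))
      = EuclideanSpace.single (Sum.inl ⟨v, hv⟩) 1 := by
  ext (w | w) <;> simp [vertexOrEpsRow, MG, Subtype.ext_iff]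

theorem colVec_MG_inl_of_notMem {W : Finset V} {v : V} (hv : v ∉ W) (i : Fin 3) :
    (MG G t).colVec (vertexOrEpsRow W) (Sum.inl (v, i)) = 0 := by
  ext (w | w)
  · simpa [vertexOrEpsRow, MG] using ne_of_mem_of_not_mem w.2 hv
  · simp [vertexOrEpsRow, MG]

theorem colVec_MG_mem_span_toRight {W : Finset V} {𝒱 : Finset ((V × Fin 3) ⊕ G.edgeSet)}
    (hW : ∀ v ∈ W, ∀ i, Sum.inl (v, i) ∉ 𝒱) {c : (V × Fin 3) ⊕ G.edgeSet} (hc : c ∈ 𝒱) :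
    (MG G t).colVec (vertexOrEpsRow W) c ∈ Submodule.span ℝ
      (Set.range fun e : 𝒱.toRight => (MG G t).colVec (vertexOrEpsRow W) (Sum.inr e)) := by
  rcases c with ⟨v, i⟩ | e
  · have hv : v ∉ W := fun hv => hW v hv i hc
    rw [colVec_MG_inl_of_notMem hv]
    exact Submodule.zero_mem _
  · exact Submodule.subset_span ⟨⟨e, by simpa using hc⟩, rfl⟩

theorem norm_single_sub_smul_colVec_MG_inr_sq_le (ht : t ≠ 0) (W : Finset V)
    (e : G.edgeSet) :
    ‖EuclideanSpace.single (Sum.inr ()) 1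
      - t⁻¹ • (MG G t).colVec (vertexOrEpsRow W) (Sum.inr e)‖ ^ 2 ≤ 2 * t ^ 2 := by
  rw [EuclideanSpace.norm_sq_eq, Fintype.sum_sum_type]
  simp only [univ_eq_attach, vertexOrEpsRow, PiLp.sub_apply, ne_eq, reduceCtorEq,
    not_false_eq_true, PiLp.single_eq_of_ne, PiLp.smul_apply, colVec_apply, MG, Sum.elim_inl,
    smul_eq_mul, mul_ite, mul_zero, zero_sub, norm_neg, Real.norm_eq_abs, sq_abs, ite_pow,
    OfNat.ofNat_ne_zero, zero_pow, univ_unique, PUnit.default_eq_unit, PiLp.single_eq_same,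
    Sum.elim_inr, ht, inv_mul_cancel₀, sub_self, norm_zero, sum_const_zero, add_zero]
  have hcoef : (t⁻¹ * t ^ 2) ^ 2 = t ^ 2 := by field_simp
  have hcard : #(W.filter (· ∈ (e : Sym2 V))) ≤ 2 :=
    (card_le_card fun v hv => by simpa using (mem_filter.mp hv).2).trans
      (Sym2.card_toFinset_le_two (e : Sym2 V))
  rw [sum_attach W (fun v => if v ∈ (e : Sym2 V) then (t⁻¹ * t ^ 2) ^ 2 else 0), ← sum_filter,
    sum_const, nsmul_eq_mul, hcoef]
  gcongr
  exact_mod_cast hcard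

theorem exists_mem_finrank_add_norm_single_inr_sub_sq_le (ht : t ≠ 0) {W : Finset V}
    (hW : W.Nonempty) {T : Finset G.edgeSet} (hTW : #T ≤ #W)
    {K : Submodule ℝ (EuclideanSpace ℝ (W ⊕ Unit))} (hK : finrank ℝ K ≤ #T)
    (hTK : ∀ e ∈ T, (MG G t).colVec (vertexOrEpsRow W) (Sum.inr e) ∈ K) :
    ∃ y ∈ K, (finrank ℝ K : ℝ) + ‖EuclideanSpace.single (Sum.inr ()) 1 - y‖ ^ 2
      ≤ #W + 2 * t ^ 2 := by
  obtain rfl | ⟨e, he⟩ := T.eq_empty_or_nonempty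
  · refine ⟨0, K.zero_mem, ?_⟩
    have hW1 : (1 : ℝ) ≤ #W := by exact_mod_cast hW.card_pos
    have hK0 : finrank ℝ K = 0 := by simpa using hK
    simp only [hK0, Nat.cast_zero, zero_add, sub_zero, PiLp.norm_single, norm_one, one_pow]
    nlinarith [sq_nonneg t]
  · refine ⟨t⁻¹ • _, K.smul_mem _ (hTK e he), ?_⟩
    have : (finrank ℝ K : ℝ) ≤ #W := by exact_mod_cast hK.trans hTW
    linarith [norm_single_sub_smul_colVec_MG_inr_sq_le (G := G) ht W e]

theorem one_sub_two_mul_sq_le_sum_sq_sub_mul (ht : t ≠ 0)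
    {𝒱 : Finset ((V × Fin 3) ⊕ G.edgeSet)} (hcard : #𝒱 = Fintype.card V) {v₀ : V}
    (hv₀ : ∀ i, Sum.inl (v₀, i) ∉ 𝒱) (A : Matrix 𝒱 ((V × Fin 3) ⊕ G.edgeSet) ℝ) :
    1 - 2 * t ^ 2 ≤ ∑ r, ∑ c, (MG G t - of (fun r (c : 𝒱) => MG G t r c) * A) r c ^ 2 := by
  set W := (𝒱.toLeft.image Prod.fst)ᶜ
  have hW : ∀ v ∈ W, ∀ i, Sum.inl (v, i) ∉ 𝒱 := fun v hv i hvi => by simp_all [W]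
  set S := of fun r (c : 𝒱) => MG G t r c
  set K := Submodule.span ℝ
    (Set.range fun e : 𝒱.toRight => (MG G t).colVec (vertexOrEpsRow W) (Sum.inr e))
  obtain ⟨y, hyK, hy⟩ := exists_mem_finrank_add_norm_single_inr_sub_sq_le (K := K) ht
    ⟨v₀, by simpa [W] using hv₀⟩ (card_toRight_le_card_compl_image_fst hcard)
    ((finrank_range_le_card _).trans_eq (Fintype.card_coe _))
    fun e he => Submodule.subset_span ⟨⟨e, he⟩, rfl⟩
  have hu : ∀ v : W, (S * A).colVec (vertexOrEpsRow W) (Sum.inl (v, 0)) ∈ K := fun v => by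
    rw [colVec_mul]
    exact K.sum_mem fun d _ => K.smul_mem _ (colVec_MG_mem_span_toRight hW d.2)
  have key := (EuclideanSpace.basisFun (W ⊕ Unit) ℝ).card_sub_finrank_le_sum_norm_sub_sq K
    (u := Sum.elim (fun v => (S * A).colVec (vertexOrEpsRow W) (Sum.inl (v, 0))) fun _ => y)
    (Sum.rec hu fun _ => hyK)
  have hcol : ∀ v : W, EuclideanSpace.single (Sum.inl v) 1
      - (S * A).colVec (vertexOrEpsRow W) (Sum.inl (v, 0))
      = (MG G t - S * A).colVec (vertexOrEpsRow W) (Sum.inl (v, 0)) := fun v => by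
    rw [colVec_sub, colVec_MG_inl_of_mem v.2]
  have hsub := sum_norm_colVec_sq_le (MG G t - S * A) (vertexOrEpsRow_injective W)
    (g := fun v : W => Sum.inl (v.1, 0))
    fun v w h => Subtype.ext (Prod.ext_iff.mp (Sum.inl_injective h)).1
  simp only [Fintype.sum_sum_type, Fintype.card_sum, Sum.elim_inl, Sum.elim_inr, hcol,
    Fintype.sum_unique, EuclideanSpace.basisFun_apply, Fintype.card_coe, Fintype.card_unit,
    Nat.cast_add, Nat.cast_one] at key
  linarith

end Reduction

theorem error_bound_lt_one_sub_two_mul_sq {m n t : ℝ} (hm : 0 ≤ m) (hn : 1 ≤ n)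
    (ht : t = 1 / (4 * (m + n) ^ 3)) :
    m * t ^ 2 + 4 * n * t ^ 6 + m * t ^ 10 < 1 - 2 * t ^ 2 := by
  have hs : 1 ≤ m + n := by linarith
  have ht0 : 0 < t := by rw [ht]; positivity
  have hst : (m + n) * t ≤ 1 / 4 := by
    rw [ht, mul_one_div, div_le_div_iff₀ (by positivity) (by norm_num)]
    nlinarith [pow_le_pow_left₀ zero_le_one hs 2]
  have ht4 : t ≤ 1 / 4 := by nlinarith
  have hmt : m * t ≤ 1 / 4 := by nlinarith
  have hnt : n * t ≤ 1 / 4 := by nlinarith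
  have h5 : t ^ 5 ≤ t := pow_le_of_le_one ht0.le (by linarith) (by norm_num)
  have h9 : t ^ 9 ≤ t := pow_le_of_le_one ht0.le (by linarith) (by norm_num)
  have : m * t ^ 2 + 4 * n * t ^ 6 + m * t ^ 10 + 2 * t ^ 2
      = (m * t) * t + 4 * (n * t) * t ^ 5 + (m * t) * t ^ 9 + 2 * t * t := by ring
  nlinarith [mul_le_mul_of_nonneg_right hmt ht0.le,
    mul_le_mul_of_nonneg_right hnt (pow_nonneg ht0.le 5),
    mul_le_mul_of_nonneg_right hmt (pow_nonneg ht0.le 9)]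

theorem good_column_set_is_graph_of_map_general
    {V : Type*} [Fintype V] [DecidableEq V] (G : SimpleGraph V) [DecidableRel G.Adj]
    (n m : ℕ) (hn : n = Fintype.card V)
    (t : ℝ) (ht : t = 1 / (4 * (m + n) ^ 3))
    (𝒱 : Finset ((V × Fin 3) ⊕ G.edgeSet)) (hcard : 𝒱.card = n)
    (hA : ∃ A : Matrix 𝒱 ((V × Fin 3) ⊕ G.edgeSet) ℝ,
      frob (MG G t - Matrix.of (fun r (c : 𝒱) => MG G t r c.val) * A) ≤
        Real.sqrt (m * t ^ 2 + 4 * n * t ^ 6 + m * t ^ 10)) :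
    ∃ ψ : V → Fin 3,
      𝒱 = Finset.image (fun v : V => Sum.inl (v, ψ v)) Finset.univ := by
  obtain ⟨A, hA⟩ := hA
  subst hn
  refine exists_eq_image_inl_of_card_eq hcard fun v₀ => ?_
  by_contra! hv₀
  have hn : (1 : ℝ) ≤ Fintype.card V := by exact_mod_cast Fintype.card_pos_iff.mpr ⟨v₀⟩
  have hbudget := error_bound_lt_one_sub_two_mul_sq (Nat.cast_nonneg m) hn ht
  have ht0 : t ≠ 0 := by rw [ht]; positivity
  have herror := one_sub_two_mul_sq_le_sum_sq_sub_mul ht0 hcard hv₀ A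
  rw [frob, Real.sqrt_le_sqrt_iff (by positivity)] at hA
  linarith

/-- If some `A` achieves `‖M(G) - S A‖ ≤ √(m t² + 4 n t⁶ + m t¹⁰)`, then the `n`-element
column-index set `𝒱` has the form `{(v, ψ(v)) : v ∈ V}` for some map `ψ : V → {1,2,3}`. -/
theorem good_column_set_is_graph_of_map
    {V : Type*} [Fintype V] [DecidableEq V] (G : SimpleGraph V) [DecidableRel G.Adj]
    (n m : ℕ) (hn : n = Fintype.card V) (hm : m = G.edgeFinset.card)
    (hn1 : 1 ≤ n) (hm1 : 1 ≤ m)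
    (t : ℝ) (ht : t = 1 / (4 * (m + n) ^ 3))
    (𝒱 : Finset ((V × Fin 3) ⊕ G.edgeSet)) (hcard : 𝒱.card = n)
    (hA : ∃ A : Matrix 𝒱 ((V × Fin 3) ⊕ G.edgeSet) ℝ,
      frob (MG G t - Matrix.of (fun r (c : 𝒱) => MG G t r c.val) * A) ≤
        Real.sqrt (m * t ^ 2 + 4 * n * t ^ 6 + m * t ^ 10)) :
    ∃ ψ : V → Fin 3,
      𝒱 = Finset.image (fun v : V => Sum.inl (v, ψ v)) Finset.univ :=
  good_column_set_is_graph_of_map_general G n m hn t ht 𝒱 hcard hA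
end

section
/- If the graph G admits a three-coloring, then δ_n(M(G)) ≤ √(m t² + 4 n t⁶ + m t¹⁰). -/
open Matrix

private lemma aux_col1 (t : ℝ) (p i : Fin 3) :
    ∑ j : Fin 3, ((if j = i then t ^ 3 else 0) - (if j = p then t ^ 3 else 0)) ^ 2
      = if p = i then 0 else 2 * t ^ 6 := by
  fin_cases p <;> fin_cases i <;> simp [Fin.sum_univ_three] <;> ring

private lemma aux_col2 (t : ℝ) (p q : Fin 3) (hpq : p ≠ q) :
    ∑ j : Fin 3, (t ^ 5 - ((if j = p then t ^ 5 else 0) + (if j = q then t ^ 5 else 0))) ^ 2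
      = t ^ 10 := by
  fin_cases p <;> fin_cases q <;> simp_all [Fin.sum_univ_three] <;> ring

private lemma aux_sum4 (t : ℝ) (p : Fin 3) :
    ∑ i : Fin 3, (if p = i then (0:ℝ) else 2 * t ^ 6) = 4 * t ^ 6 := by
  fin_cases p <;> simp [Fin.sum_univ_three] <;> ring

/-- If `G` admits a three-coloring, then `δ_n(M(G)) ≤ √(m t² + 4 n t⁶ + m t¹⁰)`. -/
theorem three_colorable_delta_le
    {V : Type*} [Fintype V] [DecidableEq V] (G : SimpleGraph V) [DecidableRel G.Adj]
    (n m : ℕ) (hn : n = Fintype.card V) (hm : m = G.edgeFinset.card)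
    (hn1 : 1 ≤ n) (hm1 : 1 ≤ m)
    (t : ℝ) (ht : t = 1 / (4 * (m + n) ^ 3))
    (φ : V → Fin 3) (hφ : ∀ u v : V, G.Adj u v → φ u ≠ φ v) :
    delta (MG G t) n ≤
      Real.sqrt (m * t ^ 2 + 4 * n * t ^ 6 + m * t ^ 10) := by
  classical
  set M := MG G t with hMdef
  set f : V → ((V × Fin 3) ⊕ G.edgeSet) := fun v => Sum.inl (v, φ v) with hfdef
  have hinj : Function.Injective f := by
    intro a b h
    simp only [hfdef, Sum.inl.injEq, Prod.mk.injEq] at h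
    exact h.1
  set 𝒱 : Finset ((V × Fin 3) ⊕ G.edgeSet) := Finset.univ.image f with h𝒱
  have hcard : 𝒱.card = n := by
    rw [h𝒱, Finset.card_image_of_injective _ hinj, Finset.card_univ, hn]
  set A0 : ((V × Fin 3) ⊕ G.edgeSet) → ((V × Fin 3) ⊕ G.edgeSet) → ℝ :=
    fun s c => match s, c with
      | Sum.inl (w, _), Sum.inl (v, _) => if w = v then (1 : ℝ) else 0
      | Sum.inl (w, _), Sum.inr e => if w ∈ (e : Sym2 V) then t ^ 2 else 0
      | Sum.inr _, _ => 0
    with hA0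
  set A : Matrix 𝒱 ((V × Fin 3) ⊕ G.edgeSet) ℝ := fun s c => A0 s.val c with hA
  set R := M - Matrix.of (fun r (c : 𝒱) => M r c.val) * A with hRdef
  have hprod : ∀ r c, (Matrix.of (fun r (c : 𝒱) => M r c.val) * A) r c
      = ∑ v : V, M r (f v) * A0 (f v) c := by
    intro r c
    rw [Matrix.mul_apply]
    have : ∀ j : 𝒱, Matrix.of (fun r (c : 𝒱) => M r c.val) r j * A j c
        = (fun x => M r x * A0 x c) j.val := fun j => rfl
    rw [Finset.sum_congr rfl (fun j _ => this j), Finset.sum_coe_sort 𝒱 (fun x => M r x * A0 x c),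
      h𝒱, Finset.sum_image (fun a _ b _ h => hinj h)]
  -- residual entries
  have hR1 : ∀ u c, R (Sum.inl u) c = 0 := by
    intro u c
    rw [hRdef, Matrix.sub_apply, hprod]
    cases c with
    | inl p =>
      obtain ⟨v, i⟩ := p
      simp [hMdef, MG, hA0, hfdef, ite_and, Finset.sum_ite_eq]
    | inr e =>
      have hsw : ∀ x : V, (if x ∈ (e : Sym2 V) then if u = x then t ^ 2 else 0 else 0)
          = (if u = x then (if x ∈ (e : Sym2 V) then t ^ 2 else 0) else 0) := by
        intro x; by_cases h : u = x <;> simp [h]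
      simp [hMdef, MG, hA0, hfdef, hsw, Finset.sum_ite_eq]
  have hR3 : ∀ x c, R (Sum.inr (Sum.inr x)) c
      = (match c with | Sum.inl _ => 0 | Sum.inr _ => t) := by
    intro x c
    rw [hRdef, Matrix.sub_apply, hprod]
    cases c with
    | inl p => simp [hMdef, MG, hA0, hfdef]
    | inr e => simp [hMdef, MG, hA0, hfdef]
  have hR2a : ∀ j v i, R (Sum.inr (Sum.inl j)) (Sum.inl (v, i))
      = (if j = i then t ^ 3 else 0) - (if j = φ v then t ^ 3 else 0) := by
    intro j v i
    rw [hRdef, Matrix.sub_apply, hprod]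
    simp [hMdef, MG, hA0, hfdef, mul_ite, ite_mul, Finset.sum_ite_eq]
  have hR2b : ∀ (j : Fin 3) (e : G.edgeSet) (a b : V), (e : Sym2 V) = s(a, b) → a ≠ b →
      R (Sum.inr (Sum.inl j)) (Sum.inr e)
      = t ^ 5 - ((if j = φ a then t ^ 5 else 0) + (if j = φ b then t ^ 5 else 0)) := by
    intro j e a b he hab
    rw [hRdef, Matrix.sub_apply, hprod]
    have hsum : ∑ v : V, M (Sum.inr (Sum.inl j)) (f v) * A0 (f v) (Sum.inr e)
        = ∑ v ∈ ({a, b} : Finset V),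
            (if j = φ v then t ^ 3 else 0) * (if v ∈ (e : Sym2 V) then t ^ 2 else 0) := by
      rw [← Finset.sum_subset (Finset.subset_univ ({a, b} : Finset V))]
      · rfl
      · intro x _ hx
        simp only [Finset.mem_insert, Finset.mem_singleton, not_or] at hx
        have : x ∉ (e : Sym2 V) := by
          rw [he, Sym2.mem_iff]
          tauto
        simp [hMdef, MG, hA0, hfdef, this]
    rw [hsum, Finset.sum_pair hab]
    have ha : a ∈ (e : Sym2 V) := by rw [he]; exact Sym2.mem_mk_left a b
    have hb : b ∈ (e : Sym2 V) := by rw [he]; exact Sym2.mem_mk_right a b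
    simp only [ha, hb, if_true, hMdef, MG]
    split_ifs <;> ring
  -- column sums
  have hcol1 : ∀ (v : V) (i : Fin 3), ∑ r, R r (Sum.inl (v, i)) ^ 2
      = if φ v = i then 0 else 2 * t ^ 6 := by
    intro v i
    rw [Fintype.sum_sum_type, Fintype.sum_sum_type]
    simp only [hR1, hR3, hR2a]
    have h1 : ∀ x : Unit, ((match (Sum.inl (v, i) : (V × Fin 3) ⊕ G.edgeSet) with
        | Sum.inl _ => (0:ℝ) | Sum.inr _ => t) ^ 2) = 0 := by intro x; simp
    simp only [ne_eq, zero_pow, Finset.sum_const_zero, h1, add_zero, zero_add,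
      OfNat.ofNat_ne_zero, not_false_iff]
    exact aux_col1 t (φ v) i
  have hcol2 : ∀ e : G.edgeSet, ∑ r, R r (Sum.inr e) ^ 2 = t ^ 2 + t ^ 10 := by
    intro e
    obtain ⟨⟨a, b⟩, hab'⟩ := Quot.exists_rep (e : Sym2 V)
    have he : (e : Sym2 V) = s(a, b) := hab'.symm
    have hadj : G.Adj a b := by
      have h := e.property
      rw [he] at h
      exact h
    have hab : a ≠ b := hadj.ne
    have hpq : φ a ≠ φ b := hφ a b hadj
    rw [Fintype.sum_sum_type, Fintype.sum_sum_type]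
    simp only [hR1, hR3, hR2b _ e a b he hab]
    have h1 : ∀ x : Unit, ((match (Sum.inr e : (V × Fin 3) ⊕ G.edgeSet) with
        | Sum.inl _ => (0:ℝ) | Sum.inr _ => t) ^ 2) = t ^ 2 := by intro x; simp
    simp only [ne_eq, zero_pow, Finset.sum_const_zero, h1, zero_add,
      OfNat.ofNat_ne_zero, not_false_iff, Finset.sum_const, Finset.card_univ,
      Fintype.card_unit, one_smul]
    rw [aux_col2 t (φ a) (φ b) hpq]
    ring
  -- total
  have htotal : ∑ i, ∑ j, R i j ^ 2 = m * t ^ 2 + 4 * n * t ^ 6 + m * t ^ 10 := by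
    rw [Finset.sum_comm, Fintype.sum_sum_type]
    have hA' : ∑ c : V × Fin 3, ∑ r, R r (Sum.inl c) ^ 2 = 4 * n * t ^ 6 := by
      rw [Fintype.sum_prod_type]
      have : ∀ v : V, ∑ i : Fin 3, ∑ r, R r (Sum.inl (v, i)) ^ 2 = 4 * t ^ 6 := by
        intro v
        simp only [hcol1]
        exact aux_sum4 t (φ v)
      rw [Finset.sum_congr rfl (fun v _ => this v), Finset.sum_const, Finset.card_univ, ← hn,
        nsmul_eq_mul]
      ring
    have hB' : ∑ c : G.edgeSet, ∑ r, R r (Sum.inr c) ^ 2 = m * t ^ 2 + m * t ^ 10 := by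
      rw [Finset.sum_congr rfl (fun e _ => hcol2 e), Finset.sum_const, Finset.card_univ,
        ← SimpleGraph.edgeFinset_card, ← hm, nsmul_eq_mul]
      ring
    rw [hA', hB']
    ring
  have hfrob : frob R = Real.sqrt (m * t ^ 2 + 4 * n * t ^ 6 + m * t ^ 10) := by
    rw [frob, htotal]
  have hbdd : BddBelow { x : ℝ | ∃ 𝒱' : Finset ((V × Fin 3) ⊕ G.edgeSet), 𝒱'.card = n ∧
      ∃ A' : Matrix 𝒱' ((V × Fin 3) ⊕ G.edgeSet) ℝ,
      x = frob (M - Matrix.of (fun r (c : 𝒱') => M r c.val) * A') } := by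
    refine ⟨0, ?_⟩
    rintro x ⟨_, _, _, rfl⟩
    exact Real.sqrt_nonneg _
  have hmem : frob R ∈ { x : ℝ | ∃ 𝒱' : Finset ((V × Fin 3) ⊕ G.edgeSet), 𝒱'.card = n ∧
      ∃ A' : Matrix 𝒱' ((V × Fin 3) ⊕ G.edgeSet) ℝ,
      x = frob (M - Matrix.of (fun r (c : 𝒱') => M r c.val) * A') } :=
    ⟨𝒱, hcard, A, by rw [hRdef]⟩
  calc delta M n ≤ frob R := csInf_le hbdd hmem
    _ = _ := hfrob
end

section
/- Let φ be a three-coloring of G, let 𝒱 = {(v, φ(v)) : v ∈ V}, let S be the submatrix of M(G) with columns indexed by 𝒱, and define A (rows indexed by 𝒱, columns indexed by (V × {1,2,3}) ⊔ E) by: A((u,φ(u)), (v,i)) = 1 if u = v (for every i ∈ {1,2,3}) and 0 otherwise; and for an edge e = {u,v} ∈ E, A((w,φ(w)), e) = t² if w ∈ {u,v} and 0 otherwise. Then ‖M(G) − SA‖² = m t² + 4 n t⁶ + m t¹⁰. -/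
open Matrix

lemma aux1 (t : ℝ) (c : Fin 3) :
    ∑ i : Fin 3, ∑ j : Fin 3,
      ((if i = j then t ^ 3 else 0) - (if i = c then t ^ 3 else 0)) ^ 2 = 4 * t ^ 6 := by
  fin_cases c <;> simp [Fin.sum_univ_three] <;> ring

lemma aux2 (t : ℝ) {x y : Fin 3} (h : x ≠ y) :
    ∑ i : Fin 3,
      (t ^ 5 - ((if i = x then t ^ 3 else 0) * t ^ 2 + (if i = y then t ^ 3 else 0) * t ^ 2)) ^ 2
      = t ^ 10 := by
  fin_cases x <;> fin_cases y <;> simp_all [Fin.sum_univ_three] <;> ring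

/-- For a three-coloring `φ` of `G`, with `S` the submatrix of `M(G)` whose columns are
indexed by `𝒱 = {(v, φ(v)) : v ∈ V}` and `A` the explicit matrix of the paper
(`A((u,φ(u)),(v,i)) = 1` iff `u = v`, `A((w,φ(w)), e) = t²` iff `w` is an endpoint of `e`),
one has `‖M(G) - S A‖² = m t² + 4 n t⁶ + m t¹⁰`. -/
theorem coloring_explicit_approximation
    {V : Type*} [Fintype V] [DecidableEq V] (G : SimpleGraph V) [DecidableRel G.Adj]
    (n m : ℕ) (hn : n = Fintype.card V) (hm : m = G.edgeFinset.card)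
    (hn1 : 1 ≤ n) (hm1 : 1 ≤ m)
    (t : ℝ) (ht : t = 1 / (4 * (m + n) ^ 3))
    (φ : V → Fin 3) (hφ : ∀ u v : V, G.Adj u v → φ u ≠ φ v)
    (S : Matrix (V ⊕ Fin 3 ⊕ Unit) V ℝ)
    (hS : S = Matrix.of fun r (v : V) => MG G t r (Sum.inl (v, φ v)))
    (A : Matrix V ((V × Fin 3) ⊕ G.edgeSet) ℝ)
    (hA : A = Matrix.of fun (u : V) c =>
      match c with
      | Sum.inl (v, _) => if u = v then (1 : ℝ) else 0
      | Sum.inr e => if u ∈ (e : Sym2 V) then t ^ 2 else 0) :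
    frob (MG G t - S * A) ^ 2 = m * t ^ 2 + 4 * n * t ^ 6 + m * t ^ 10 := by
  have hsq : frob (MG G t - S * A) ^ 2
      = ∑ r, ∑ c, (MG G t - S * A) r c ^ 2 := by
    unfold frob
    exact Real.sq_sqrt (by positivity)
  -- entries in rows indexed by V vanish
  have row1 : ∀ (u : V) c, (MG G t - S * A) (Sum.inl u) c = 0 := by
    intro u c
    rcases c with ⟨v, i⟩ | e
    · simp [hS, hA, Matrix.sub_apply, Matrix.mul_apply, MG, ite_mul, Finset.sum_ite_eq]
    · have h : ∀ x : V, (if x ∈ (e : Sym2 V) then if u = x then t ^ 2 else 0 else 0)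
          = if u = x then (if x ∈ (e : Sym2 V) then t ^ 2 else 0) else 0 := by
        intro x; by_cases h : u = x <;> simp [h]
      simp [hS, hA, Matrix.sub_apply, Matrix.mul_apply, MG, ite_mul, mul_ite, h,
        Finset.sum_ite_eq]
  -- entries in the ε row
  have row3 : ∀ c, (MG G t - S * A) (Sum.inr (Sum.inr ())) c
      = (match c with | Sum.inl _ => (0 : ℝ) | Sum.inr _ => t) := by
    intro c
    rcases c with ⟨v, i⟩ | e <;>
      simp [hS, hA, Matrix.sub_apply, Matrix.mul_apply, MG]
  -- entries in rows indexed by Fin 3, vertex columns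
  have row2l : ∀ (i : Fin 3) (v : V) (j : Fin 3),
      (MG G t - S * A) (Sum.inr (Sum.inl i)) (Sum.inl (v, j))
      = (if i = j then t ^ 3 else 0) - (if i = φ v then t ^ 3 else 0) := by
    intro i v j
    simp [hS, hA, Matrix.sub_apply, Matrix.mul_apply, MG, ite_mul, mul_ite,
      Finset.sum_ite_eq]
  -- entries in rows indexed by Fin 3, edge columns
  have row2r : ∀ (i : Fin 3) (e : G.edgeSet) (a b : V), a ≠ b → (e : Sym2 V) = s(a, b) →
      (S * A) (Sum.inr (Sum.inl i)) (Sum.inr e)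
      = (if i = φ a then t ^ 3 else 0) * t ^ 2 + (if i = φ b then t ^ 3 else 0) * t ^ 2 := by
    intro i e a b hab he
    have h : ∀ v : V, S (Sum.inr (Sum.inl i)) v * A v (Sum.inr e)
        = (if i = φ v then t ^ 3 else 0) * (if v = a ∨ v = b then t ^ 2 else 0) := by
      intro v; simp [hS, hA, MG, he]
    rw [Matrix.mul_apply]
    simp only [h]
    rw [← Finset.sum_subset (Finset.subset_univ ({a, b} : Finset V))
      (by intro x _ hx; simp at hx; simp [hx.1, hx.2]),
      Finset.sum_pair hab]
    simp
  -- per-edge column sum over the Fin 3 rows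
  have hedge : ∀ e : G.edgeSet,
      ∑ i : Fin 3, (MG G t - S * A) (Sum.inr (Sum.inl i)) (Sum.inr e) ^ 2 = t ^ 10 := by
    intro e
    obtain ⟨⟨a, b⟩, hrep⟩ := Quot.exists_rep (e : Sym2 V)
    have he : (e : Sym2 V) = s(a, b) := hrep.symm
    have hadj : G.Adj a b := by
      have := e.2
      rw [he] at this
      exact this
    have hab : a ≠ b := hadj.ne
    have hc : φ a ≠ φ b := hφ a b hadj
    have hM : ∀ i : Fin 3, MG G t (Sum.inr (Sum.inl i)) (Sum.inr e) = t ^ 5 := by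
      intro i; rfl
    calc ∑ i : Fin 3, (MG G t - S * A) (Sum.inr (Sum.inl i)) (Sum.inr e) ^ 2
        = ∑ i : Fin 3, (t ^ 5 - ((if i = φ a then t ^ 3 else 0) * t ^ 2
            + (if i = φ b then t ^ 3 else 0) * t ^ 2)) ^ 2 := by
          refine Finset.sum_congr rfl fun i _ => ?_
          rw [Matrix.sub_apply, hM i, row2r i e a b hab he]
      _ = t ^ 10 := aux2 t hc
  have hcard : Fintype.card G.edgeSet = m := by
    rw [hm, SimpleGraph.edgeFinset_card]
  -- sum over the Fin 3 rows
  have h2 : ∑ i : Fin 3, ∑ c, (MG G t - S * A) (Sum.inr (Sum.inl i)) c ^ 2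
      = 4 * n * t ^ 6 + m * t ^ 10 := by
    have : ∀ i : Fin 3, ∑ c, (MG G t - S * A) (Sum.inr (Sum.inl i)) c ^ 2
        = (∑ p : V × Fin 3, (MG G t - S * A) (Sum.inr (Sum.inl i)) (Sum.inl p) ^ 2)
          + ∑ e : G.edgeSet, (MG G t - S * A) (Sum.inr (Sum.inl i)) (Sum.inr e) ^ 2 :=
      fun i => Fintype.sum_sum_type _
    rw [Finset.sum_congr rfl fun i _ => this i, Finset.sum_add_distrib]
    have hL : ∑ i : Fin 3, ∑ p : V × Fin 3,
        (MG G t - S * A) (Sum.inr (Sum.inl i)) (Sum.inl p) ^ 2 = 4 * n * t ^ 6 := by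
      simp only [Fintype.sum_prod_type]
      rw [Finset.sum_comm]
      have : ∀ v : V, ∑ i : Fin 3, ∑ j : Fin 3,
          (MG G t - S * A) (Sum.inr (Sum.inl i)) (Sum.inl (v, j)) ^ 2 = 4 * t ^ 6 := by
        intro v
        rw [Finset.sum_comm]
        calc ∑ j : Fin 3, ∑ i : Fin 3,
              (MG G t - S * A) (Sum.inr (Sum.inl i)) (Sum.inl (v, j)) ^ 2
            = ∑ i : Fin 3, ∑ j : Fin 3,
              ((if i = j then t ^ 3 else 0) - (if i = φ v then t ^ 3 else 0)) ^ 2 := by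
              rw [Finset.sum_comm]
              exact Finset.sum_congr rfl fun i _ => Finset.sum_congr rfl fun j _ => by
                rw [row2l]
          _ = 4 * t ^ 6 := aux1 t (φ v)
      rw [Finset.sum_congr rfl fun v _ => this v, Finset.sum_const, hn]
      simp only [nsmul_eq_mul, Finset.card_univ]
      ring
    have hR : ∑ i : Fin 3, ∑ e : G.edgeSet,
        (MG G t - S * A) (Sum.inr (Sum.inl i)) (Sum.inr e) ^ 2 = m * t ^ 10 := by
      rw [Finset.sum_comm]
      rw [Finset.sum_congr rfl fun e _ => hedge e, Finset.sum_const]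
      simp [hcard]
    rw [hL, hR]
  -- sum over the ε row
  have h3 : ∑ c, (MG G t - S * A) (Sum.inr (Sum.inr ())) c ^ 2 = m * t ^ 2 := by
    rw [Fintype.sum_sum_type]
    simp only [row3]
    rw [Finset.sum_const, Finset.sum_const]
    simp [hcard]
  rw [hsq, Fintype.sum_sum_type, Fintype.sum_sum_type]
  simp only [row1]
  rw [h2]
  have hu : ∑ x : Unit, ∑ c, (MG G t - S * A) (Sum.inr (Sum.inr x)) c ^ 2
      = m * t ^ 2 := by
    simpa using h3
  rw [hu]
  simp
  ring
end

section
/- Let ψ : V → {1,2,3} be a map that is not a three-coloring of G (i.e., there is an edge {u,v} ∈ E with ψ(u) = ψ(v)), let 𝒱 = {(v, ψ(v)) : v ∈ V}, and let S be the submatrix of M(G) with columns indexed by 𝒱. Then for every matrix A with rows indexed by 𝒱 and columns indexed by (V × {1,2,3}) ⊔ E one has ‖M(G) − SA‖ > √(m t² + 4 n t⁶ + m t¹⁰). -/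
open Matrix

/-! Split `‖M(G) - S A‖²` by columns and, inside a column, by the colour classes `F` of `ψ`.
If `x`, `a` are the vertex parts of a column of `M(G)` and of `A`, and `t³ y` is the entry of
that column in the colour row of `F`, then the rows of `F` and that colour row contribute
`∑_{w ∈ F} (x_w - a_w)² + (t³ y - t³ ∑_{w ∈ F} a_w)²`, which by Cauchy–Schwarz is at least
`κ (y - ∑_{w ∈ F} x_w)²` with `κ = t⁶ / (1 + n t⁶)`, whatever `A` is. Hence every vertex column
`(v, i)` with `i ≠ ψ v` costs at least `2κ`, and every edge column costs `t² + t⁴ κ`, plus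
`2 t⁴ κ` more when the edge is monochromatic. Since `ψ` has a monochromatic edge,
`‖M(G) - S A‖² ≥ m t² + 4 n κ + (m + 2) t⁴ κ`, which beats the threshold because `t` is small. -/

open Finset

lemma mul_sq_div_le_sum_sq_add {ι : Type*} (s : Finset ι) (b : ι → ℝ) {ε N : ℝ}
    (hε : 0 ≤ ε) (hN : 0 < N) (hs : (s.card : ℝ) ≤ N) (d : ℝ) :
    ε * d ^ 2 / (1 + N * ε) ≤ ∑ w ∈ s, b w ^ 2 + ε * (d - ∑ w ∈ s, b w) ^ 2 := by
  have hCS : (∑ w ∈ s, b w) ^ 2 ≤ N * ∑ w ∈ s, b w ^ 2 :=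
    sq_sum_le_card_mul_sum_sq.trans (by gcongr)
  rw [div_le_iff₀ (by positivity)]
  -- `N * (rhs - lhs) = (1 + N ε) (N Q - B²) + (B - N ε (d - B))²` with `B = ∑ b`, `Q = ∑ b²`
  nlinarith [sq_nonneg (∑ w ∈ s, b w - N * ε * (d - ∑ w ∈ s, b w)),
    mul_nonneg (by positivity : (0 : ℝ) ≤ 1 + N * ε) (sub_nonneg.2 hCS)]

lemma mul_sum_sq_sub_sum_fiber_le {V K : Type*} [Fintype V] [Nonempty V] [Fintype K] [DecidableEq K]
    (p : V → K) (x a : V → ℝ) (y : K → ℝ) (τ : ℝ) :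
    τ ^ 2 / (1 + Fintype.card V * τ ^ 2) * ∑ j, (y j - ∑ w with p w = j, x w) ^ 2 ≤
      ∑ w, (x w - a w) ^ 2 + ∑ j, (τ * y j - τ * ∑ w with p w = j, a w) ^ 2 := by
  rw [← sum_fiberwise univ p, mul_sum, ← sum_add_distrib]
  refine sum_le_sum fun j _ => ?_
  have h := mul_sq_div_le_sum_sq_add {w | p w = j} (fun w => a w - x w) (sq_nonneg τ)
    (N := Fintype.card V) (by exact_mod_cast Fintype.card_pos)
    (by exact_mod_cast card_le_univ _) (y j - ∑ w with p w = j, x w)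
  rw [div_mul_eq_mul_div]
  refine h.trans_eq ?_
  congr 1
  · exact sum_congr rfl fun w _ => by ring
  · rw [sum_sub_distrib]; ring

lemma sum_sq_ite_sub_ite {K : Type*} [Fintype K] [DecidableEq K] (i p : K) :
    ∑ j, ((if j = i then 1 else 0) - (if j = p then 1 else 0) : ℝ) ^ 2 =
      if i = p then 0 else 2 := by
  split_ifs with h
  · simp [h]
  · norm_num [sub_sq, sum_add_distrib, sum_sub_distrib, Ne.symm h]

lemma sum_sq_one_sub_ite_sub_ite_s8 {K : Type*} [Fintype K] [DecidableEq K] (p q : K) :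
    ∑ j, (1 - (if j = p then 1 else 0) - (if j = q then 1 else 0) : ℝ) ^ 2 =
      Fintype.card K - 2 + if p = q then 2 else 0 := by
  rcases eq_or_ne p q with rfl | h
  · norm_num [sub_sq, sum_add_distrib, sum_sub_distrib]; ring
  · norm_num [sub_sq, sum_add_distrib, sum_sub_distrib, h, Ne.symm h]; ring

section
variable {V : Type*} [Fintype V] [DecidableEq V] (G : SimpleGraph V) [DecidableRel G.Adj]
  (t : ℝ) (ψ : V → Fin 3) (A : Matrix V ((V × Fin 3) ⊕ G.edgeSet) ℝ)

local notation "𝓡" => MG G t - Matrix.submatrix (MG G t) id (fun v => Sum.inl (v, ψ v)) * A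
local notation "κ" => t ^ 6 / (1 + Fintype.card V * t ^ 6)

lemma sum_sq_MG_sub_mul_col_eq (c : (V × Fin 3) ⊕ G.edgeSet) :
    ∑ r, (𝓡 r c) ^ 2 = ∑ w, (MG G t (.inl w) c - A w c) ^ 2 +
        ∑ j, (MG G t (.inr (.inl j)) c - t ^ 3 * ∑ w with ψ w = j, A w c) ^ 2 +
        MG G t (.inr (.inr ())) c ^ 2 := by
  have hclass (j : Fin 3) : ∑ w, (if j = ψ w then t ^ 3 * A w c else 0) =
      t ^ 3 * ∑ w with ψ w = j, A w c := by
    simp only [sum_filter, mul_sum, mul_ite, mul_zero, eq_comm]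
  simp [Fintype.sum_sum_type, Matrix.mul_apply, MG, hclass, add_assoc]

lemma sum_sq_MG_sub_mul_col_ge_of_colorRow [Nonempty V] (c : (V × Fin 3) ⊕ G.edgeSet)
    (y : Fin 3 → ℝ) (hy : ∀ j, MG G t (.inr (.inl j)) c = t ^ 3 * y j) :
    κ * ∑ j, (y j - ∑ w with ψ w = j, MG G t (.inl w) c) ^ 2 + MG G t (.inr (.inr ())) c ^ 2 ≤
      ∑ r, (𝓡 r c) ^ 2 := by
  have h := mul_sum_sq_sub_sum_fiber_le ψ (fun w => MG G t (.inl w) c) (fun w => A w c) y (t ^ 3)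
  rw [← pow_mul] at h
  rw [sum_sq_MG_sub_mul_col_eq]
  simp only [hy]
  linarith

lemma sum_sq_MG_sub_mul_vertexCol_ge [Nonempty V] (v : V) (i : Fin 3) :
    (if i = ψ v then 0 else 2) * κ ≤ ∑ r, (𝓡 r (.inl (v, i))) ^ 2 := by
  have h := sum_sq_MG_sub_mul_col_ge_of_colorRow G t ψ A (.inl (v, i))
    (fun j => if j = i then 1 else 0) (fun j => by simp [MG])
  have hclass (j : Fin 3) : ∑ w with ψ w = j, MG G t (.inl w) (.inl (v, i)) =
      if j = ψ v then 1 else 0 := by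
    simp [MG, eq_comm]
  simp only [hclass, sum_sq_ite_sub_ite] at h
  nlinarith [sq_nonneg (MG G t (.inr (.inr ())) (.inl (v, i)))]

lemma sum_sq_MG_sub_mul_edgeCol_ge [Nonempty V] {u v : V} (huv : G.Adj u v) :
    t ^ 2 + (1 + if ψ u = ψ v then 2 else 0) * (t ^ 4 * κ) ≤
      ∑ r, (𝓡 r (.inr ⟨s(u, v), huv⟩)) ^ 2 := by
  have h := sum_sq_MG_sub_mul_col_ge_of_colorRow G t ψ A (.inr ⟨s(u, v), huv⟩) (fun _ => t ^ 2)
    (fun j => by simp only [MG]; ring)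
  have hclass (j : Fin 3) : ∑ w with ψ w = j, MG G t (.inl w) (.inr ⟨s(u, v), huv⟩) =
      t ^ 2 * ((if j = ψ u then 1 else 0) + (if j = ψ v then 1 else 0)) := by
    have hne : u ≠ v := huv.ne
    have hsplit (w : V) : MG G t (.inl w) (.inr ⟨s(u, v), huv⟩) =
        (if w = u then t ^ 2 else 0) + (if w = v then t ^ 2 else 0) := by
      by_cases hu : w = u <;> by_cases hv : w = v <;> simp_all [MG]
    simp [hsplit, sum_add_distrib, eq_comm, mul_add]
  have hsum : ∑ j : Fin 3, (t ^ 2 - t ^ 2 * ((if j = ψ u then 1 else 0) +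
      (if j = ψ v then 1 else 0))) ^ 2 = t ^ 4 * (1 + if ψ u = ψ v then 2 else 0) := by
    simp_rw [show ∀ x : ℝ, (t ^ 2 - t ^ 2 * x) ^ 2 = t ^ 4 * (1 - x) ^ 2 by intro; ring,
      ← mul_sum, ← sub_sub, sum_sq_one_sub_ite_sub_ite_s8, Fintype.card_fin]
    norm_num
  have hε : MG G t (.inr (.inr ())) (.inr ⟨s(u, v), huv⟩) = t := rfl
  simp only [hclass] at h
  rw [hsum, hε] at h
  linarith

lemma sum_sq_MG_sub_mul_vertexCols_ge [Nonempty V] :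
    4 * Fintype.card V * κ ≤ ∑ p : V × Fin 3, ∑ r, (𝓡 r (.inl p)) ^ 2 := by
  have hcount (p : Fin 3) : ∑ i : Fin 3, (if i = p then (0 : ℝ) else 2) = 4 := by
    norm_num [sum_ite, filter_ne']
  rw [Fintype.sum_prod_type]
  calc 4 * Fintype.card V * κ
      = ∑ v : V, ∑ i : Fin 3, (if i = ψ v then 0 else 2) * κ := by
        simp only [← sum_mul, hcount, sum_const, card_univ, nsmul_eq_mul]
        ring
    _ ≤ _ := sum_le_sum fun v _ => sum_le_sum fun i _ =>
        sum_sq_MG_sub_mul_vertexCol_ge G t ψ A v i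

lemma sum_sq_MG_sub_mul_edgeCols_ge [Nonempty V] {u₀ v₀ : V} (hadj : G.Adj u₀ v₀)
    (hmono : ψ u₀ = ψ v₀) :
    #G.edgeFinset * (t ^ 2 + t ^ 4 * κ) + 2 * (t ^ 4 * κ) ≤
      ∑ e : G.edgeSet, ∑ r, (𝓡 r (.inr e)) ^ 2 := by
  have hκ : 0 ≤ t ^ 4 * κ := by positivity
  have hedge (e : G.edgeSet) : t ^ 2 + t ^ 4 * κ ≤ ∑ r, (𝓡 r (.inr e)) ^ 2 := by
    obtain ⟨e, he⟩ := e
    induction e using Sym2.ind with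
    | _ u v =>
      refine le_trans ?_ (sum_sq_MG_sub_mul_edgeCol_ge G t ψ A he)
      split_ifs <;> linarith
  have hmono_edge := sum_sq_MG_sub_mul_edgeCol_ge G t ψ A hadj
  rw [if_pos hmono] at hmono_edge
  let e₀ : G.edgeSet := ⟨s(u₀, v₀), hadj⟩
  have he₀ := mem_univ e₀
  rw [SimpleGraph.edgeFinset_card, ← card_univ, ← nsmul_eq_mul, ← sum_const,
    ← add_sum_erase _ _ he₀, ← add_sum_erase _ _ he₀]
  have := sum_le_sum fun e (_ : e ∈ univ.erase e₀) => hedge e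
  linarith

end

lemma threshold_lt_lower_bound {m n t : ℝ} (hm : 0 ≤ m) (hn : 0 ≤ n) (hmn : 1 ≤ m + n)
    (ht : 0 < t) (hsmall : (m + n) * t ≤ 1 / 4) :
    m * t ^ 2 + 4 * n * t ^ 6 + m * t ^ 10 <
      4 * n * (t ^ 6 / (1 + n * t ^ 6)) +
        (m * (t ^ 2 + t ^ 4 * (t ^ 6 / (1 + n * t ^ 6))) +
          2 * (t ^ 4 * (t ^ 6 / (1 + n * t ^ 6)))) := by
  have hκ0 : 0 < t ^ 6 / (1 + n * t ^ 6) := by positivity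
  have hκ : t ^ 6 / (1 + n * t ^ 6) * (1 + n * t ^ 6) = t ^ 6 := div_mul_cancel₀ _ (by positivity)
  generalize t ^ 6 / (1 + n * t ^ 6) = κ at hκ0 hκ ⊢
  have hnt : n * t ≤ 1 / 4 := by nlinarith
  have hmt : m * t ≤ 1 / 4 := by nlinarith
  have ht4 : t ^ 4 ≤ 1 := pow_le_one₀ ht.le (by nlinarith)
  -- substituting `t⁶ = κ (1 + n t⁶)`, the claim becomes `4 (n t)² + (m t) (n t) t⁴ < 2`
  have hkey : 4 * (n * t) ^ 2 + (m * t) * (n * t) * t ^ 4 < 2 := by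
    have h1 : (n * t) ^ 2 ≤ (1 / 4) ^ 2 := pow_le_pow_left₀ (by positivity) hnt 2
    have h2 : (m * t) * (n * t) ≤ 1 / 4 * (1 / 4) :=
      mul_le_mul hmt hnt (by positivity) (by norm_num)
    nlinarith [mul_le_mul h2 ht4 (by positivity) (by norm_num)]
  have hpos := mul_pos (mul_pos hκ0 (pow_pos ht 4)) (sub_pos.2 hkey)
  linear_combination hpos - (4 * n + m * t ^ 4) * hκ

theorem non_coloring_exceeds_threshold_general
    {V : Type*} [Fintype V] [DecidableEq V] (G : SimpleGraph V) [DecidableRel G.Adj]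
    (n m : ℕ) (hn : n = Fintype.card V) (hm : m = G.edgeFinset.card)
    (t : ℝ) (ht : t = 1 / (4 * (m + n) ^ 3))
    (ψ : V → Fin 3) (hψ : ∃ u v : V, G.Adj u v ∧ ψ u = ψ v)
    (S : Matrix (V ⊕ Fin 3 ⊕ Unit) V ℝ)
    (hS : S = Matrix.of fun r (v : V) => MG G t r (Sum.inl (v, ψ v)))
    (A : Matrix V ((V × Fin 3) ⊕ G.edgeSet) ℝ) :
    frob (MG G t - S * A) >
      Real.sqrt (m * t ^ 2 + 4 * n * t ^ 6 + m * t ^ 10) := by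
  obtain ⟨u₀, v₀, hadj, hmono⟩ := hψ
  have : Nonempty V := ⟨u₀⟩
  obtain rfl : S = (MG G t).submatrix id (fun v => Sum.inl (v, ψ v)) := hS
  subst hn hm
  have hmn : (1 : ℝ) ≤ #G.edgeFinset + Fintype.card V := mod_cast le_add_left Fintype.card_pos
  have hsmall : (#G.edgeFinset + Fintype.card V : ℝ) * t ≤ 1 / 4 := by
    rw [ht, mul_one_div, div_le_div_iff₀ (by positivity) (by norm_num)]
    nlinarith [pow_le_pow_right₀ hmn (show 1 ≤ 3 by norm_num)]
  rw [gt_iff_lt, frob, sum_comm, Fintype.sum_sum_type]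
  refine Real.sqrt_lt_sqrt (by positivity) ?_
  have := threshold_lt_lower_bound (Nat.cast_nonneg _) (Nat.cast_nonneg _) hmn
    (by rw [ht]; positivity) hsmall
  linarith [sum_sq_MG_sub_mul_vertexCols_ge G t ψ A,
    sum_sq_MG_sub_mul_edgeCols_ge G t ψ A hadj hmono]

/-- If `ψ : V → {1,2,3}` is not a three-coloring of `G` and `S` is the submatrix of `M(G)`
with columns indexed by `𝒱 = {(v, ψ(v)) : v ∈ V}`, then for every matrix `A` one has
`‖M(G) - S A‖ > √(m t² + 4 n t⁶ + m t¹⁰)`. -/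
theorem non_coloring_exceeds_threshold
    {V : Type*} [Fintype V] [DecidableEq V] (G : SimpleGraph V) [DecidableRel G.Adj]
    (n m : ℕ) (hn : n = Fintype.card V) (hm : m = G.edgeFinset.card)
    (hn1 : 1 ≤ n) (hm1 : 1 ≤ m)
    (t : ℝ) (ht : t = 1 / (4 * (m + n) ^ 3))
    (ψ : V → Fin 3) (hψ : ∃ u v : V, G.Adj u v ∧ ψ u = ψ v)
    (S : Matrix (V ⊕ Fin 3 ⊕ Unit) V ℝ)
    (hS : S = Matrix.of fun r (v : V) => MG G t r (Sum.inl (v, ψ v)))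
    (A : Matrix V ((V × Fin 3) ⊕ G.edgeSet) ℝ) :
    frob (MG G t - S * A) >
      Real.sqrt (m * t ^ 2 + 4 * n * t ^ 6 + m * t ^ 10) :=
  non_coloring_exceeds_threshold_general G n m hn hm t ht ψ hψ S hS A
end
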